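/- arXiv:2205.04933 — 5 statements merged into one kernel-verified Lean document; each statement's English description precedes it below -/
import Mathlib

section
/- Every automorphism of the Cuntz algebra O_H induced by a unitary U ∈ U(H) with U ≠ 1 is outer (i.e., not of the form Ad(v) for any unitary v ∈ O_H), where H is a separable infinite-dimensional Hilbert space. -/
set_option maxHeartbeats 1000000

noncomputable section

namespace QFOuter

open scoped ComplexConjugate

local notation "⟪" x ", " y "⟫" => @inner ℂ _ _ x y

variable {ι : Type*} {i₀ : ι}

/-- Sequences in `ι` which are eventually equal to `i₀`. -/
def XX (ι : Type*) (i₀ : ι) : Type _ := {f : ℕ → ι // ∃ N, ∀ n, N ≤ n → f n = i₀}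

variable (ι i₀) in
/-- The constant sequence. -/
def f₀ : XX ι i₀ := ⟨fun _ => i₀, 0, fun _ _ => rfl⟩

/-- Tail of a sequence. -/
def tl (g : XX ι i₀) : XX ι i₀ :=
  ⟨fun n => g.1 (n + 1), g.2.imp fun N h n hn => h (n + 1) (by omega)⟩

/-- Prepend a letter. -/
def cns (i : ι) (f : XX ι i₀) : XX ι i₀ :=
  ⟨fun n => Nat.rec i (fun m _ => f.1 m) n, by
    obtain ⟨N, h⟩ := f.2
    refine ⟨N + 1, fun n hn => ?_⟩
    cases n with
    | zero => omega
    | succ m => exact h m (by omega)⟩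

@[simp] lemma cns_zero (i : ι) (f : XX ι i₀) : (cns i f).1 0 = i := rfl

@[simp] lemma tl_cns (i : ι) (f : XX ι i₀) : tl (cns i f) = f :=
  Subtype.ext <| funext fun _ => rfl

@[simp] lemma tl_f₀ : tl (f₀ ι i₀) = f₀ ι i₀ := rfl

@[simp] lemma f₀_val (n : ℕ) : (f₀ ι i₀).1 n = i₀ := rfl

/-- Decomposition `g = cns (g 0) (tl g)` as an equivalence. -/
def consEquiv : ι × XX ι i₀ ≃ XX ι i₀ where
  toFun p := cns p.1 p.2
  invFun g := (g.1 0, tl g)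
  left_inv p := by
    cases p with
    | mk i f => simp
  right_inv g := Subtype.ext <| funext fun n => by cases n <;> rfl

/-- The representation space. -/
abbrev Ksp (ι : Type*) (i₀ : ι) := lp (fun _ : XX ι i₀ => ℂ) 2

lemma memℓp_two_iff {α : Type*} (f : α → ℂ) :
    Memℓp f 2 ↔ Summable fun a => ‖f a‖ ^ 2 := by
  have h : ∀ a, ‖f a‖ ^ ((2 : ENNReal).toReal) = ‖f a‖ ^ (2 : ℕ) := fun a => by
    rw [show ((2 : ENNReal).toReal) = ((2 : ℕ) : ℝ) by norm_num, Real.rpow_natCast]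
  rw [memℓp_gen_iff (p := 2) (by norm_num)]
  exact ⟨fun hs => hs.congr fun a => h a, fun hs => hs.congr fun a => (h a).symm⟩

lemma memℓp_raw (c : lp (fun _ : ι => ℂ) 2) (x : Ksp ι i₀) :
    Memℓp (fun g : XX ι i₀ => c (g.1 0) * x (tl g)) 2 := by
  rw [memℓp_two_iff]
  have hc : Summable fun i => ‖c i‖ ^ 2 := (memℓp_two_iff _).1 (lp.memℓp c)
  have hx : Summable fun f => ‖x f‖ ^ 2 := (memℓp_two_iff _).1 (lp.memℓp x)
  have h : Summable fun p : ι × XX ι i₀ => ‖c p.1‖ ^ 2 * ‖x p.2‖ ^ 2 :=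
    hc.mul_of_nonneg hx (fun i => by positivity) (fun f => by positivity)
  have h2 : Summable ((fun g : XX ι i₀ => ‖c (g.1 0) * x (tl g)‖ ^ 2) ∘ (consEquiv (ι := ι) (i₀ := i₀))) := by
    refine h.congr fun p => ?_
    change _ = ‖c p.1 * x p.2‖ ^ 2
    rw [norm_mul, mul_pow]
  exact (Equiv.summable_iff _).1 h2

/-- The raw Cuntz operator. -/
def rawLp (c : lp (fun _ : ι => ℂ) 2) (x : Ksp ι i₀) : Ksp ι i₀ :=
  ⟨fun g => c (g.1 0) * x (tl g), memℓp_raw c x⟩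

@[simp] lemma rawLp_apply (c : lp (fun _ : ι => ℂ) 2) (x : Ksp ι i₀) (g : XX ι i₀) :
    (rawLp c x : ∀ _ : XX ι i₀, ℂ) g = c (g.1 0) * x (tl g) := rfl

lemma tsum_cons (A : ι → ℂ) (B : XX ι i₀ → ℂ) (hA : Summable fun i => ‖A i‖)
    (hB : Summable fun f => ‖B f‖) :
    ∑' g : XX ι i₀, A (g.1 0) * B (tl g) = (∑' i, A i) * ∑' f, B f := by
  rw [← Equiv.tsum_eq (consEquiv (ι := ι) (i₀ := i₀)) (fun g => A (g.1 0) * B (tl g))]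
  have : ∀ p : ι × XX ι i₀,
      A (((consEquiv (ι := ι) (i₀ := i₀)) p).1 0) * B (tl ((consEquiv (ι := ι) (i₀ := i₀)) p))
        = A p.1 * B p.2 := fun p => rfl
  rw [tsum_congr this]
  exact (tsum_mul_tsum_of_summable_norm hA hB).symm

lemma isConj22 : ((2 : ENNReal).toReal).HolderConjugate ((2 : ENNReal).toReal) := by
  rw [Real.holderConjugate_iff]
  norm_num

lemma inner_rawLp (c d : lp (fun _ : ι => ℂ) 2) (y x : Ksp ι i₀) :
    ⟪rawLp c y, rawLp d x⟫ = (∑' i, conj (c i) * d i) * ⟪y, x⟫ := by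
  have hA : Summable fun i => ‖conj (c i) * d i‖ := by
    simpa [norm_mul] using lp.summable_mul isConj22 c d
  have hB : Summable fun f : XX ι i₀ => ‖conj (y f) * x f‖ := by
    simpa [norm_mul] using lp.summable_mul isConj22 y x
  rw [lp.inner_eq_tsum]
  simp only [RCLike.inner_apply', rawLp_apply, map_mul]
  have : ∀ g : XX ι i₀,
      conj (c (g.1 0)) * conj (y (tl g)) * (d (g.1 0) * x (tl g))
        = (fun i => conj (c i) * d i) (g.1 0) * ((fun f => conj (y f) * x f) (tl g)) :=
    fun g => by ring
  rw [tsum_congr this, tsum_cons _ _ hA hB, lp.inner_eq_tsum]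
  simp [RCLike.inner_apply', -RCLike.inner_apply]

lemma norm_rawLp (c : lp (fun _ : ι => ℂ) 2) (x : Ksp ι i₀) :
    ‖rawLp c x‖ = ‖c‖ * ‖x‖ := by
  have hcc : (⟪c, c⟫ : ℂ) = ∑' i, conj (c i) * c i := by
    rw [lp.inner_eq_tsum]
    exact tsum_congr fun i => RCLike.inner_apply' _ _
  have h2 : ⟪rawLp c x, rawLp c x⟫ = ⟪c, c⟫ * ⟪x, x⟫ := by
    rw [inner_rawLp, hcc]
  rw [norm_eq_sqrt_re_inner (𝕜 := ℂ), h2, inner_self_eq_norm_sq_to_K (𝕜 := ℂ),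
    inner_self_eq_norm_sq_to_K (𝕜 := ℂ), ← RCLike.ofReal_pow, ← RCLike.ofReal_pow,
    ← RCLike.ofReal_mul, RCLike.ofReal_re,
    show ‖c‖ ^ 2 * ‖x‖ ^ 2 = (‖c‖ * ‖x‖) ^ 2 by ring, Real.sqrt_sq (by positivity)]

lemma rawLp_add_right (c : lp (fun _ : ι => ℂ) 2) (x y : Ksp ι i₀) :
    rawLp c (x + y) = rawLp c x + rawLp c y := by
  apply lp.ext
  funext g
  simp only [lp.coeFn_add, Pi.add_apply, rawLp_apply]
  ring

lemma rawLp_smul_right (c : lp (fun _ : ι => ℂ) 2) (a : ℂ) (x : Ksp ι i₀) :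
    rawLp c (a • x) = a • rawLp c x := by
  apply lp.ext
  funext g
  simp only [lp.coeFn_smul, Pi.smul_apply, rawLp_apply, smul_eq_mul]
  ring

/-- The Cuntz operator as a continuous linear map. -/
def Top (c : lp (fun _ : ι => ℂ) 2) : Ksp ι i₀ →L[ℂ] Ksp ι i₀ :=
  LinearMap.mkContinuous
    { toFun := rawLp c
      map_add' := rawLp_add_right c
      map_smul' := rawLp_smul_right c }
    ‖c‖ (fun x => le_of_eq (norm_rawLp c x))

@[simp] lemma Top_apply (c : lp (fun _ : ι => ℂ) 2) (x : Ksp ι i₀) :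
    Top (i₀ := i₀) c x = rawLp c x := rfl

lemma Top_add (c d : lp (fun _ : ι => ℂ) 2) :
    Top (i₀ := i₀) (c + d) = Top c + Top d := by
  ext x : 1
  apply lp.ext
  funext g
  simp only [Top_apply, ContinuousLinearMap.add_apply, lp.coeFn_add, Pi.add_apply, rawLp_apply]
  ring

lemma Top_smul (a : ℂ) (c : lp (fun _ : ι => ℂ) 2) :
    Top (i₀ := i₀) (a • c) = a • Top c := by
  ext x : 1
  apply lp.ext
  funext g
  simp only [Top_apply, ContinuousLinearMap.smul_apply, lp.coeFn_smul, Pi.smul_apply, rawLp_apply,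
    smul_eq_mul]
  ring

section Basis

variable {H : Type*} [NormedAddCommGroup H] [InnerProductSpace ℂ H]

/-- The Cuntz family associated to a Hilbert basis. -/
def T (i₀ : ι) (b : HilbertBasis ι ℂ H) : H →ₗ[ℂ] (Ksp ι i₀ →L[ℂ] Ksp ι i₀) where
  toFun ξ := Top (i₀ := i₀) (b.repr ξ)
  map_add' ξ η := by
    show Top (i₀ := i₀) (b.repr (ξ + η)) = Top (b.repr ξ) + Top (b.repr η)
    rw [map_add, Top_add]
  map_smul' a ξ := by
    show Top (i₀ := i₀) (b.repr (a • ξ)) = a • Top (b.repr ξ)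
    rw [map_smul, Top_smul]

@[simp] lemma T_apply (i₀ : ι) (b : HilbertBasis ι ℂ H) (ξ : H) :
    T i₀ b ξ = Top (i₀ := i₀) (b.repr ξ) := rfl

lemma T_rel [CompleteSpace H] (i₀ : ι) (b : HilbertBasis ι ℂ H) (ξ η : H) :
    star (T i₀ b ξ) * T i₀ b η = (⟪ξ, η⟫ : ℂ) • 1 := by
  refine ContinuousLinearMap.ext fun x => ?_
  refine ext_inner_left ℂ fun y => ?_
  rw [ContinuousLinearMap.mul_apply, ContinuousLinearMap.star_eq_adjoint,
    ContinuousLinearMap.adjoint_inner_right]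
  have h1 : T i₀ b ξ y = rawLp (b.repr ξ) y := rfl
  have h2 : T i₀ b η x = rawLp (b.repr η) x := rfl
  rw [h1, h2, inner_rawLp]
  have h3 : ∑' i, conj ((b.repr ξ) i) * (b.repr η) i = ⟪ξ, η⟫ := by
    have : ∀ i, conj ((b.repr ξ) i) * (b.repr η) i = ⟪ξ, b i⟫ * ⟪b i, η⟫ := fun i => by
      rw [b.repr_apply_apply, b.repr_apply_apply, inner_conj_symm]
    rw [tsum_congr this]
    exact b.tsum_inner_mul_inner ξ η
  rw [h3, ContinuousLinearMap.smul_apply, ContinuousLinearMap.one_apply, inner_smul_right]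

end Basis

section Delta

variable [DecidableEq (XX ι i₀)]

/-- The distinguished vector. -/
def delta (ι : Type*) (i₀ : ι) [DecidableEq (XX ι i₀)] : Ksp ι i₀ :=
  lp.single 2 (f₀ ι i₀) 1

lemma Top_delta (c : lp (fun _ : ι => ℂ) 2) (hc0 : c i₀ = 1) (hc : ∀ i, i ≠ i₀ → c i = 0) :
    Top (i₀ := i₀) c (delta ι i₀) = delta ι i₀ := by
  apply lp.ext
  funext g
  simp only [Top_apply, rawLp_apply, delta]
  by_cases hg : g = f₀ ι i₀
  · subst hg
    rw [tl_f₀, lp.single_apply_self]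
    show c ((f₀ ι i₀).1 0) * 1 = 1
    rw [f₀_val, hc0, mul_one]
  · rw [lp.single_apply_ne _ _ _ hg]
    by_cases h0 : g.1 0 = i₀
    · have ht : tl g ≠ f₀ ι i₀ := by
        intro h
        apply hg
        refine Subtype.ext (funext fun n => ?_)
        cases n with
        | zero => exact h0
        | succ m => exact congrArg (fun u : XX ι i₀ => u.1 m) h
      rw [lp.single_apply_ne _ _ _ ht, mul_zero]
    · rw [hc _ h0, zero_mul]

lemma delta_ne_zero : delta ι i₀ ≠ 0 := by
  intro h
  have h1 : (delta ι i₀ : ∀ _ : XX ι i₀, ℂ) (f₀ ι i₀) = 1 := lp.single_apply_self _ _ _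
  rw [h] at h1
  simp at h1

end Delta

lemma fixed_zero (c : lp (fun _ : ι => ℂ) 2) (h1 : c i₀ ≠ 1) (x : Ksp ι i₀)
    (hx : Top (i₀ := i₀) c x = x) : x = 0 := by
  have hpt : ∀ g : XX ι i₀, x g = c (g.1 0) * x (tl g) := by
    intro g
    conv_lhs => rw [← hx]
    rfl
  have key : ∀ (N : ℕ) (g : XX ι i₀), (∀ n, N ≤ n → g.1 n = i₀) → x g = 0 := by
    intro N
    induction N with
    | zero =>
      intro g hg
      have hgf : g = f₀ ι i₀ := Subtype.ext (funext fun n => hg n (Nat.zero_le n))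
      subst hgf
      have h2 := hpt (f₀ ι i₀)
      rw [tl_f₀] at h2
      have h3 : (1 - c ((f₀ ι i₀).1 0)) * x (f₀ ι i₀) = 0 := by
        rw [sub_mul, one_mul, ← h2, sub_self]
      rcases mul_eq_zero.1 h3 with h | h
      · exact absurd (sub_eq_zero.1 h).symm h1
      · exact h
    | succ N ih =>
      intro g hg
      rw [hpt g, ih (tl g) (fun n hn => hg (n + 1) (by omega)), mul_zero]
  apply lp.ext
  funext g
  obtain ⟨N, hN⟩ := g.2
  simpa using key N g hN

end QFOuter

/-- Let `H` be a separable infinite-dimensional Hilbert space and `O_H` the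
universal unital C*-algebra generated by the range of a linear map `s : H → O_H` with
`s(ξ)* s(η) = ⟨ξ, η⟩ · 1`.  Every automorphism of `O_H` induced by a unitary
`U ∈ U(H) \ {1}` (i.e. sending `s ξ` to `s (U ξ)`) is outer: it is not of the form `Ad v`
for any unitary `v ∈ O_H`. -/
theorem quasifree_automorphism_is_outer
    {H : Type u} [NormedAddCommGroup H] [InnerProductSpace ℂ H] [CompleteSpace H]
    [TopologicalSpace.SeparableSpace H]
    (hinf : ¬ FiniteDimensional ℂ H)
    {O : Type u} [CStarAlgebra O]
    (s : H →ₗ[ℂ] O)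
    (hrel : ∀ ξ η : H, star (s ξ) * s η = (inner ℂ ξ η : ℂ) • 1)
    (hgen : ∀ D : StarSubalgebra ℂ O, IsClosed (D : Set O) →
      (∀ ξ : H, s ξ ∈ D) → ∀ x : O, x ∈ D)
    (huniv : ∀ (C : Type u) [CStarAlgebra C] (t : H →ₗ[ℂ] C),
      (∀ ξ η : H, star (t ξ) * t η = (inner ℂ ξ η : ℂ) • 1) →
      ∃ φ : O →⋆ₐ[ℂ] C, ∀ ξ : H, φ (s ξ) = t ξ)
    (U : H ≃ₗᵢ[ℂ] H) (hU : U ≠ LinearIsometryEquiv.refl ℂ H)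
    (e : O ≃⋆ₐ[ℂ] O) (he : ∀ ξ : H, e (s ξ) = s (U ξ)) :
    ¬ ∃ v ∈ unitary O, ∀ x : O, e x = v * x * star v := by
  classical
  rintro ⟨v, hv, hAd⟩
  -- find a unit vector moved by `U`
  have hex : ∃ ζ : H, U ζ ≠ ζ := by
    by_contra h
    push_neg at h
    refine hU ?_
    refine LinearIsometryEquiv.ext fun ζ => ?_
    simp [h ζ]
  obtain ⟨ζ, hζ⟩ := hex
  have hζ0 : ζ ≠ 0 := by
    rintro rfl
    exact hζ (map_zero U)
  set a : ℂ := ((‖ζ‖ : ℝ) : ℂ)⁻¹ with ha_def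
  have ha : a ≠ 0 := by
    rw [ha_def]
    exact inv_ne_zero (Complex.ofReal_ne_zero.2 (norm_ne_zero_iff.2 hζ0))
  set ξ₀ : H := a • ζ with hξ₀def
  have hnorm : ‖ξ₀‖ = 1 := by
    rw [hξ₀def, norm_smul, ha_def]
    rw [norm_inv, Complex.norm_real, Real.norm_eq_abs, abs_norm]
    field_simp
  have hUξ : U ξ₀ ≠ ξ₀ := by
    rw [hξ₀def, map_smul]
    intro hsm
    exact hζ (smul_right_injective H ha hsm)
  have hUnorm : ‖U ξ₀‖ = 1 := by rw [U.norm_map, hnorm]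
  have hinner : (inner ℂ ξ₀ (U ξ₀) : ℂ) ≠ 1 := by
    intro h
    apply hUξ
    have h2 : (inner ℂ (U ξ₀) ξ₀ : ℂ) = 1 := by rw [← inner_conj_symm, h, map_one]
    have h1 : ‖U ξ₀ - ξ₀‖ ^ 2 = 0 := by
      rw [@norm_sub_sq ℂ, h2, hUnorm, hnorm]
      norm_num
    have h3 : ‖U ξ₀ - ξ₀‖ = 0 := sq_eq_zero_iff.1 h1
    exact sub_eq_zero.1 (norm_eq_zero.1 h3)
  -- a Hilbert basis containing ξ₀
  have hON : Orthonormal ℂ ((↑) : ({ξ₀} : Set H) → H) := by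
    refine ⟨fun i => ?_, fun i j hij => ?_⟩
    · obtain ⟨y, hy⟩ := i
      rw [Set.mem_singleton_iff] at hy
      subst hy
      exact hnorm
    · exact absurd (Subtype.ext ((Set.mem_singleton_iff.1 i.2).trans
        (Set.mem_singleton_iff.1 j.2).symm)) hij
  obtain ⟨w, b, hsw, hbcoe⟩ := hON.exists_hilbertBasis_extension
  have hmem : ξ₀ ∈ w := hsw (Set.mem_singleton _)
  set i₀ : w := ⟨ξ₀, hmem⟩ with hi₀def
  have hbi₀ : b i₀ = ξ₀ := by rw [hbcoe]
  -- the concrete representation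
  obtain ⟨φ, hφ⟩ := huniv (QFOuter.Ksp w i₀ →L[ℂ] QFOuter.Ksp w i₀)
    (QFOuter.T i₀ b) (QFOuter.T_rel i₀ b)
  rw [Unitary.mem_iff] at hv
  -- intertwining relation
  have hint : s (U ξ₀) * v = v * s ξ₀ := by
    have h1 := hAd (s ξ₀)
    rw [he] at h1
    rw [h1, mul_assoc, mul_assoc, hv.1, mul_one]
  have hφint : QFOuter.T i₀ b (U ξ₀) * φ v = φ v * QFOuter.T i₀ b ξ₀ := by
    have h2 := congrArg φ hint
    rwa [map_mul, map_mul, hφ, hφ] at h2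
  -- the distinguished vector is fixed by `T ξ₀`
  have hc0 : (b.repr ξ₀) i₀ = 1 := by
    rw [b.repr_apply_apply, hbi₀, inner_self_eq_norm_sq_to_K, hnorm]
    norm_num
  have hcne : ∀ i : w, i ≠ i₀ → (b.repr ξ₀) i = 0 := by
    intro i hi
    rw [b.repr_apply_apply, ← hbi₀]
    exact b.orthonormal.2 hi
  have hδ : QFOuter.T i₀ b ξ₀ (QFOuter.delta w i₀) = QFOuter.delta w i₀ :=
    QFOuter.Top_delta (b.repr ξ₀) hc0 hcne
  -- so `φ v δ` is fixed by `T (U ξ₀)`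
  have hfix : QFOuter.T i₀ b (U ξ₀) (φ v (QFOuter.delta w i₀)) = φ v (QFOuter.delta w i₀) := by
    calc QFOuter.T i₀ b (U ξ₀) (φ v (QFOuter.delta w i₀))
        = (QFOuter.T i₀ b (U ξ₀) * φ v) (QFOuter.delta w i₀) := rfl
      _ = (φ v * QFOuter.T i₀ b ξ₀) (QFOuter.delta w i₀) := by rw [hφint]
      _ = φ v (QFOuter.T i₀ b ξ₀ (QFOuter.delta w i₀)) := rfl
      _ = φ v (QFOuter.delta w i₀) := by rw [hδ]
  -- but `T (U ξ₀)` has no nonzero fixed vector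
  have hc1 : (b.repr (U ξ₀)) i₀ ≠ 1 := by
    rw [b.repr_apply_apply, hbi₀]
    exact hinner
  have hzero : φ v (QFOuter.delta w i₀) = 0 :=
    QFOuter.fixed_zero (b.repr (U ξ₀)) hc1 _ hfix
  -- contradiction with injectivity of `φ v`
  have h2 : φ (star v) (φ v (QFOuter.delta w i₀)) = QFOuter.delta w i₀ := by
    calc φ (star v) (φ v (QFOuter.delta w i₀))
        = (φ (star v) * φ v) (QFOuter.delta w i₀) := rfl
      _ = φ (star v * v) (QFOuter.delta w i₀) := by rw [map_mul]
      _ = QFOuter.delta w i₀ := by rw [hv.1, map_one, ContinuousLinearMap.one_apply]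
  rw [hzero, map_zero] at h2
  exact QFOuter.delta_ne_zero h2.symm
end
end

section
/- Let β : G → Aut(B) be an action, u : G → U(B^†) a β-cocycle with values in unitaries of the form 1 + b (b ∈ B), and v : G → U(B^†) similarly. If (ζ_i) is a net in C_c(G, B) witnessing amenability of β (i.e., ‖ζ_i‖_2 ≤ 1, ⟨ζ_i, ζ_i⟩ a → a, ‖aζ_i − ζ_i a‖_2 → 0, and max_{g∈K} ‖(ζ_i − β̄_g(ζ_i))a‖_2 → 0 for all a ∈ B and compact K ⊆ G), then the same net witnesses amenability of the perturbed action β^u given by β^u_g = Ad(u_g) ∘ β_g. In particular, amenability of actions is preserved under cocycle perturbation. -/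
set_option linter.unusedSectionVars false
set_option linter.unusedVariables false
set_option maxHeartbeats 1000000


open MeasureTheory Filter

variable {G : Type*} [Group G] [TopologicalSpace G] [IsTopologicalGroup G]
  [LocallyCompactSpace G] [MeasurableSpace G] [BorelSpace G]
  {B : Type*} [NonUnitalCStarAlgebra B]

/-- The Hilbert-module `L²`-norm `‖f‖₂ = ‖∫ f(t)* f(t) dμ(t)‖^{1/2}` on `C_c(G, B)`. -/
noncomputable def l2norm (μ : Measure G) (f : G → B) : ℝ :=
  Real.sqrt ‖∫ t, star (f t) * f t ∂μ‖

/-- The perturbation `β^u_g = Ad(u_g) ∘ β_g` of an action `β` by a cocycle `u` taking values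
in unitaries of the unitization `B^† = Unitization ℂ B` (with scalar part `1`); since `B` is
an ideal in `B^†`, the conjugate `u_g β_g(b) u_g*` lies in (the canonical image of) `B`, and
we record its `B`-component. -/
noncomputable def perturbedAction (β : G → B ≃⋆ₐ[ℂ] B)
    (u : G → unitary (Unitization ℂ B)) (g : G) (b : B) : B :=
  ((u g : Unitization ℂ B) * (β g b : Unitization ℂ B) * star (u g : Unitization ℂ B)).snd


/-! ### Auxiliary development -/


/-! ### Generic helpers -/

noncomputable def myInr : B →L[ℂ] Unitization ℂ B :=
  { toFun := (↑·), map_add' := fun x y => Unitization.inr_add ℂ x y,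
    map_smul' := fun c x => Unitization.inr_smul ℂ c x,
    cont := Unitization.isometry_inr.continuous }

noncomputable def betaL (e : B ≃⋆ₐ[ℂ] B) : B →L[ℂ] B :=
  { toFun := e, map_add' := map_add e, map_smul' := map_smul e,
    cont := (StarAlgEquiv.isometry e).continuous }

theorem my_smul_nonneg {r : ℝ} (hr : 0 ≤ r) {x : Unitization ℂ B} (hx : 0 ≤ x) :
    0 ≤ r • x := by
  have h := star_left_conjugate_nonneg hx ((Real.sqrt r : ℂ) • (1 : Unitization ℂ B))
  have hs : star ((Real.sqrt r : ℂ) • (1 : Unitization ℂ B)) =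
      (Real.sqrt r : ℂ) • (1 : Unitization ℂ B) := by
    simp [star_smul, Complex.star_def, Complex.conj_ofReal]
  rw [hs] at h
  have : ((Real.sqrt r : ℂ) • (1 : Unitization ℂ B)) * x *
      ((Real.sqrt r : ℂ) • (1 : Unitization ℂ B)) = r • x := by
    simp only [smul_mul_assoc, mul_smul_comm, one_mul, mul_one, smul_smul]
    rw [← Complex.ofReal_mul, Real.mul_self_sqrt hr]
    rw [← Complex.coe_smul]
  rwa [this] at h

theorem my_smul_le {r : ℝ} (hr : 0 ≤ r) {x y : Unitization ℂ B} (hxy : x ≤ y) :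
    r • x ≤ r • y := by
  rw [← sub_nonneg, ← smul_sub]
  exact my_smul_nonneg hr (sub_nonneg.mpr hxy)

theorem my_nonneg_convex : Convex ℝ ({x : Unitization ℂ B | 0 ≤ x}) := by
  intro x hx y hy a b ha hb _
  exact add_nonneg (my_smul_nonneg ha hx) (my_smul_nonneg hb hy)

theorem scalar_cs {s α b : ℝ} (hs : 0 ≤ s) (hα : 0 ≤ α) (hb : 0 ≤ b)
    (H : ∀ t : ℝ, 0 < t → 2*t*s ≤ t^2*α*s + b) : s ≤ α * b := by
  rcases hα.eq_or_lt with h0 | h0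
  · by_contra hcon
    push_neg at hcon
    have hs' : 0 < s := lt_of_le_of_lt (by positivity) hcon
    have ht : (0:ℝ) < (b+1)/(2*s) := by positivity
    have := H _ ht
    rw [← h0] at this
    have h2 : 2 * ((b+1)/(2*s)) * s = b + 1 := by field_simp
    rw [h2] at this
    nlinarith
  · have := H (1/α) (by positivity)
    have h2 : (1/α)^2 * α = 1/α := by field_simp
    rw [h2] at this
    have h3 : (1/α) * s ≤ b := by linarith
    calc s = α * ((1/α)*s) := by field_simp
    _ ≤ α * b := mul_le_mul_of_nonneg_left h3 hα

/-! ### Integral helpers -/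

section IntHelpers
variable {μ : Measure G}

theorem integral_inr {h : G → B} (hh : Integrable h μ) :
    ∫ t, ((h t : Unitization ℂ B)) ∂μ = ((∫ t, h t ∂μ : B) : Unitization ℂ B) := by
  have := ContinuousLinearMap.integral_comp_comm myInr hh
  simpa [myInr] using this

theorem int_const_mul {h : G → B} (hh : Integrable h μ) (b : B) :
    ∫ t, b * h t ∂μ = b * ∫ t, h t ∂μ :=
  ContinuousLinearMap.integral_comp_comm (ContinuousLinearMap.mul ℂ B b) hh

theorem int_mul_const {h : G → B} (hh : Integrable h μ) (b : B) :
    ∫ t, h t * b ∂μ = (∫ t, h t ∂μ) * b :=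
  ContinuousLinearMap.integral_comp_comm ((ContinuousLinearMap.mul ℂ B).flip b) hh

theorem int_star {h : G → B} (hh : Integrable h μ) :
    ∫ t, star (h t) ∂μ = star (∫ t, h t ∂μ) :=
  ContinuousLinearMap.integral_comp_comm (((starL' ℝ : B ≃L[ℝ] B) : B →L[ℝ] B)) hh

theorem int_beta {h : G → B} (hh : Integrable h μ) (e : B ≃⋆ₐ[ℂ] B) :
    ∫ t, e (h t) ∂μ = e (∫ t, h t ∂μ) :=
  ContinuousLinearMap.integral_comp_comm (betaL e) hh

theorem integ_const_mul {h : G → B} (hh : Integrable h μ) (b : B) :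
    Integrable (fun t => b * h t) μ :=
  (ContinuousLinearMap.mul ℂ B b).integrable_comp hh

theorem integ_mul_const {h : G → B} (hh : Integrable h μ) (b : B) :
    Integrable (fun t => h t * b) μ :=
  ((ContinuousLinearMap.mul ℂ B).flip b).integrable_comp hh

end IntHelpers

/-! ### Nice functions -/

def Nice (f : G → B) : Prop := Continuous f ∧ HasCompactSupport f

theorem Nice.integrable {μ : Measure G} [μ.IsHaarMeasure] {f : G → B} (hf : Nice f) :
    Integrable f μ := hf.1.integrable_of_hasCompactSupport hf.2

theorem Nice.star_mul {f g : G → B} (hf : Nice f) (hg : Nice g) :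
    Nice (fun t => star (f t) * g t) :=
  ⟨(hf.1.star).mul hg.1, (hg.2.mul_left (f := fun t => star (f t)))⟩

theorem Nice.mul_const {f : G → B} (hf : Nice f) (b : B) : Nice (fun t => f t * b) :=
  ⟨hf.1.mul continuous_const, hf.2.mul_right⟩

theorem Nice.const_mul {f : G → B} (hf : Nice f) (b : B) : Nice (fun t => b * f t) :=
  ⟨continuous_const.mul hf.1, hf.2.mul_left⟩

theorem Nice.add {f g : G → B} (hf : Nice f) (hg : Nice g) : Nice (fun t => f t + g t) :=
  ⟨hf.1.add hg.1, hf.2.add hg.2⟩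

theorem Nice.neg {f : G → B} (hf : Nice f) : Nice (fun t => - f t) :=
  ⟨hf.1.neg, hf.2.comp_left (g := Neg.neg) neg_zero⟩

theorem Nice.sub {f g : G → B} (hf : Nice f) (hg : Nice g) : Nice (fun t => f t - g t) := by
  have := hf.add hg.neg
  simpa [sub_eq_add_neg] using this

theorem Nice.smul {f : G → B} (hf : Nice f) (r : ℝ) : Nice (fun t => r • f t) :=
  ⟨hf.1.const_smul r, hf.2.smul_left⟩

theorem Nice.beta {f : G → B} (hf : Nice f) (e : B ≃⋆ₐ[ℂ] B) : Nice (fun t => e (f t)) :=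
  ⟨(StarAlgEquiv.isometry e).continuous.comp hf.1,
   hf.2.comp_left (map_zero e)⟩

theorem Nice.translate {f : G → B} (hf : Nice f) (g : G) : Nice (fun h => f (g * h)) := by
  refine ⟨hf.1.comp (continuous_const.mul continuous_id), ?_⟩
  have := hf.2.comp_homeomorph (Homeomorph.mulLeft g)
  exact this

theorem Nice.inr {f : G → B} (hf : Nice f) :
    Nice (fun t => ((f t : Unitization ℂ B))) :=
  ⟨Unitization.isometry_inr.continuous.comp hf.1, hf.2.comp_left (g := fun b : B => (b : Unitization ℂ B)) (Unitization.inr_zero ℂ)⟩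

/-! ### Positivity of inner products -/

section Pos
variable {μ : Measure G} [μ.IsHaarMeasure]

theorem integral_nonneg_of_cpt {F : G → Unitization ℂ B}
    (hc : Continuous F) (hs : HasCompactSupport F) (h : ∀ t, 0 ≤ F t) :
    0 ≤ ∫ t, F t ∂μ := by
  have hint : Integrable F μ := hc.integrable_of_hasCompactSupport hs
  set K := tsupport F with hK
  have hKm : MeasurableSet K := (isClosed_tsupport F).measurableSet
  have h1 : ∫ t, F t ∂μ = ∫ t in K, F t ∂μ :=
    (setIntegral_eq_integral_of_forall_compl_eq_zero
      (fun x hx => image_eq_zero_of_notMem_tsupport hx)).symm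
  rw [h1]
  set m := μ.restrict K with hm
  have hfin : m Set.univ < ⊤ := by
    rw [hm, Measure.restrict_apply_univ]
    exact hs.measure_lt_top
  rcases eq_or_ne (m Set.univ) 0 with h0 | h0
  · have : m = 0 := Measure.measure_univ_eq_zero.mp h0
    rw [show (∫ t in K, F t ∂μ) = ∫ t, F t ∂m from rfl, this, integral_zero_measure]
  · set ν := (m Set.univ)⁻¹ • m with hν
    have : IsProbabilityMeasure ν := by
      constructor
      rw [hν, Measure.smul_apply, smul_eq_mul, ENNReal.inv_mul_cancel h0 hfin.ne]
    have hmem : (∫ t, F t ∂ν) ∈ {x : Unitization ℂ B | 0 ≤ x} := by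
      refine Convex.integral_mem (μ := ν) (f := F) my_nonneg_convex (CStarAlgebra.isClosed_nonneg)
        (Filter.Eventually.of_forall h) ?_
      exact (hint.restrict (s := K)).smul_measure (ENNReal.inv_ne_top.mpr h0)
    have key : ∫ t, F t ∂m = (m Set.univ).toReal • ∫ t, F t ∂ν := by
      rw [hν, integral_smul_measure, smul_smul, ENNReal.toReal_inv,
        mul_inv_cancel₀, one_smul]
      simp only [ne_eq, ENNReal.toReal_eq_zero_iff]
      push_neg
      exact ⟨h0, hfin.ne⟩
    rw [show (∫ t in K, F t ∂μ) = ∫ t, F t ∂m from rfl, key]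
    exact my_smul_nonneg ENNReal.toReal_nonneg hmem

theorem inr_int_self_nonneg {f : G → B} (hf : Nice f) :
    0 ≤ ((∫ t, star (f t) * f t ∂μ : B) : Unitization ℂ B) := by
  rw [← integral_inr (hf.star_mul hf).integrable]
  refine integral_nonneg_of_cpt (hf.star_mul hf).inr.1 (hf.star_mul hf).inr.2 (fun t => ?_)
  rw [Unitization.inr_mul, Unitization.inr_star]
  exact star_mul_self_nonneg _

end Pos

section CS
variable {μ : Measure G} [μ.IsHaarMeasure]

theorem my_cs {f g : G → B} (hf : Nice f) (hg : Nice g) :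
    ‖∫ t, star (f t) * g t ∂μ‖ ≤
      Real.sqrt ‖∫ t, star (f t) * f t ∂μ‖ * Real.sqrt ‖∫ t, star (g t) * g t ∂μ‖ := by
  set P := ∫ t, star (f t) * f t ∂μ with hP
  set Q := ∫ t, star (g t) * g t ∂μ with hQ
  set a := ∫ t, star (f t) * g t ∂μ with ha
  have hXi : Integrable (fun t => star (f t) * f t) μ := (hf.star_mul hf).integrable
  have hYi : Integrable (fun t => star (f t) * g t) μ := (hf.star_mul hg).integrable
  have hZi : Integrable (fun t => star (g t) * f t) μ := (hg.star_mul hf).integrable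
  have hWi : Integrable (fun t => star (g t) * g t) μ := (hg.star_mul hg).integrable
  have hZ : ∫ t, star (g t) * f t ∂μ = star a := by
    rw [ha, ← int_star hYi]
    congr 1; funext t; rw [star_mul, star_star]
  have hPn : 0 ≤ ((P : B) : Unitization ℂ B) := inr_int_self_nonneg hf
  have hQn : 0 ≤ ((Q : B) : Unitization ℂ B) := inr_int_self_nonneg hg
  have hpn : 0 ≤ star ((a : B) : Unitization ℂ B) * ((a : B) : Unitization ℂ B) :=
    star_mul_self_nonneg _
  have hnp : ‖star ((a : B) : Unitization ℂ B) * ((a : B) : Unitization ℂ B)‖ = ‖a‖^2 := by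
    rw [CStarRing.norm_star_mul_self, Unitization.norm_inr, pow_two]
  have key : ∀ t : ℝ, 0 < t → 2*t*‖a‖^2 ≤ t^2*‖P‖*‖a‖^2 + ‖Q‖ := by
    intro t ht
    set v : G → B := fun s => t • (f s * a) - g s with hv
    have hvn : Nice v := ((hf.mul_const a).smul t).sub hg
    have h0 : 0 ≤ ((∫ s, star (v s) * v s ∂μ : B) : Unitization ℂ B) :=
      inr_int_self_nonneg hvn
    have expand : (fun s => star (v s) * v s) = fun s =>
        (t^2) • (star a * (star (f s) * f s) * a) - t • (star a * (star (f s) * g s))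
          - t • ((star (g s) * f s) * a) + star (g s) * g s := by
      funext s
      simp only [hv, star_sub, star_smul, star_trivial, star_mul, star_star, mul_sub, sub_mul,
        smul_mul_assoc, mul_smul_comm, smul_smul, pow_two, mul_assoc, smul_sub]
      abel
    have i1 : ∫ s, star a * (star (f s) * f s) * a ∂μ = star a * P * a := by
      rw [show (fun s => star a * (star (f s) * f s) * a)
            = (fun s => (star a * (star (f s) * f s)) * a) from rfl,
        int_mul_const (integ_const_mul hXi (star a)) a, int_const_mul hXi (star a)]
    have i2 : ∫ s, star a * (star (f s) * g s) ∂μ = star a * a := by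
      rw [int_const_mul hYi (star a)]
    have i3 : ∫ s, (star (g s) * f s) * a ∂μ = star a * a := by
      rw [int_mul_const hZi a, hZ]
    have int1 : Integrable (fun s => (t^2) • (star a * (star (f s) * f s) * a)) μ :=
      ((integ_mul_const (integ_const_mul hXi (star a)) a).smul (t^2))
    have int2 : Integrable (fun s => t • (star a * (star (f s) * g s))) μ :=
      ((integ_const_mul hYi (star a)).smul t)
    have int3 : Integrable (fun s => t • ((star (g s) * f s) * a)) μ :=
      ((integ_mul_const hZi a).smul t)
    have int12 : Integrable (fun s => (t^2) • (star a * (star (f s) * f s) * a)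
        - t • (star a * (star (f s) * g s))) μ := int1.sub int2
    have int123 : Integrable (fun s => (t^2) • (star a * (star (f s) * f s) * a)
        - t • (star a * (star (f s) * g s)) - t • ((star (g s) * f s) * a)) μ :=
      int12.sub int3
    have hE : ∫ s, star (v s) * v s ∂μ
        = (t^2) • (star a * P * a) - (2*t) • (star a * a) + Q := by
      rw [expand, integral_add int123 hWi,
        integral_sub int12 int3, integral_sub int1 int2,
        integral_smul, integral_smul, integral_smul, i1, i2, i3, ← hQ]
      have h2t : (2*t) • (star a * a) = t • (star a * a) + t • (star a * a) := by
        rw [← add_smul]; ring_nf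
      rw [h2t]; abel
    rw [hE] at h0
    have h0' : 0 ≤ ((t^2) • (star ((a:B) : Unitization ℂ B) * ((P:B) : Unitization ℂ B) * ↑a)
        - (2*t) • (star (↑a : Unitization ℂ B) * ↑a) + ↑Q) := by
      convert h0 using 1
      rw [Unitization.inr_add, Unitization.inr_sub, Unitization.inr_smul, Unitization.inr_smul,
        Unitization.inr_mul, Unitization.inr_mul, Unitization.inr_mul, Unitization.inr_star]
    rw [sub_add_eq_add_sub] at h0'
    have h1 := sub_nonneg.mp h0'
    have hconj : star ((a:B) : Unitization ℂ B) * ↑P * ↑a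
        ≤ ‖((P:B) : Unitization ℂ B)‖ • (star (↑a : Unitization ℂ B) * ↑a) :=
      CStarAlgebra.star_left_conjugate_le_norm_smul (IsSelfAdjoint.of_nonneg hPn)
    have h2 : (2*t) • (star ((a:B) : Unitization ℂ B) * ↑a)
        ≤ (t^2*‖P‖) • (star (↑a : Unitization ℂ B) * ↑a) + ↑Q := by
      refine le_trans h1 (add_le_add_left ?_ _)
      refine le_trans (my_smul_le (sq_nonneg t) hconj) ?_
      rw [smul_smul, Unitization.norm_inr]
    have h3 : ‖(2*t) • (star ((a:B) : Unitization ℂ B) * ↑a)‖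
        ≤ ‖(t^2*‖P‖) • (star ((a:B) : Unitization ℂ B) * ↑a) + ↑Q‖ :=
      CStarAlgebra.norm_le_norm_of_nonneg_of_le
        (my_smul_nonneg (by positivity) hpn) h2
    rw [norm_smul, Real.norm_of_nonneg (by positivity), hnp] at h3
    have h4 : ‖(t^2*‖P‖) • (star ((a:B) : Unitization ℂ B) * ↑a) + ↑Q‖
        ≤ t^2*‖P‖*‖a‖^2 + ‖Q‖ := by
      refine le_trans (norm_add_le _ _) (le_of_eq ?_)
      rw [norm_smul, Real.norm_of_nonneg (by positivity), hnp, Unitization.norm_inr]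
    exact le_trans h3 h4
  have final : ‖a‖^2 ≤ ‖P‖ * ‖Q‖ :=
    scalar_cs (by positivity) (norm_nonneg _) (norm_nonneg _) key
  calc ‖a‖ = Real.sqrt (‖a‖^2) := (Real.sqrt_sq (norm_nonneg a)).symm
  _ ≤ Real.sqrt (‖P‖ * ‖Q‖) := Real.sqrt_le_sqrt final
  _ = Real.sqrt ‖P‖ * Real.sqrt ‖Q‖ := Real.sqrt_mul (norm_nonneg _) _
end CS

section L2
variable {μ : Measure G} [μ.IsHaarMeasure]

theorem l2norm_nonneg (f : G → B) : 0 ≤ l2norm μ f := Real.sqrt_nonneg _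

theorem l2norm_neg (f : G → B) : l2norm μ (fun t => - f t) = l2norm μ f := by
  unfold l2norm
  simp only [star_neg, neg_mul_neg]

theorem l2norm_add_le {f g : G → B} (hf : Nice f) (hg : Nice g) :
    l2norm μ (fun t => f t + g t) ≤ l2norm μ f + l2norm μ g := by
  have hXi : Integrable (fun t => star (f t) * f t) μ := (hf.star_mul hf).integrable
  have hYi : Integrable (fun t => star (f t) * g t) μ := (hf.star_mul hg).integrable
  have hZi : Integrable (fun t => star (g t) * f t) μ := (hg.star_mul hf).integrable
  have hWi : Integrable (fun t => star (g t) * g t) μ := (hg.star_mul hg).integrable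
  have expand : (fun t => star (f t + g t) * (f t + g t)) = fun t =>
      (star (f t) * f t + star (f t) * g t) + (star (g t) * f t + star (g t) * g t) := by
    funext t
    simp only [star_add, add_mul, mul_add]
    abel
  have h12 : Integrable (fun t => star (f t) * f t + star (f t) * g t) μ := hXi.add hYi
  have h34 : Integrable (fun t => star (g t) * f t + star (g t) * g t) μ := hZi.add hWi
  have hint : ∫ t, star (f t + g t) * (f t + g t) ∂μ
      = (∫ t, star (f t) * f t ∂μ + ∫ t, star (f t) * g t ∂μ)
        + (∫ t, star (g t) * f t ∂μ + ∫ t, star (g t) * g t ∂μ) := by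
    rw [expand, integral_add h12 h34, integral_add hXi hYi, integral_add hZi hWi]
  have hZeq : ∫ t, star (g t) * f t ∂μ = star (∫ t, star (f t) * g t ∂μ) := by
    rw [← int_star hYi]
    congr 1; funext t; rw [star_mul, star_star]
  have hcs := my_cs hf hg (μ := μ)
  have hnorm : ‖∫ t, star (f t + g t) * (f t + g t) ∂μ‖
      ≤ (l2norm μ f + l2norm μ g)^2 := by
    rw [hint]
    refine le_trans (norm_add_le _ _) (le_trans (add_le_add (norm_add_le _ _) (norm_add_le _ _)) ?_)
    rw [hZeq, norm_star]
    have e1 : ‖∫ t, star (f t) * f t ∂μ‖ = (l2norm μ f)^2 := by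
      rw [l2norm, Real.sq_sqrt (norm_nonneg _)]
    have e2 : ‖∫ t, star (g t) * g t ∂μ‖ = (l2norm μ g)^2 := by
      rw [l2norm, Real.sq_sqrt (norm_nonneg _)]
    rw [e1, e2]
    have := hcs
    rw [show Real.sqrt ‖∫ t, star (f t) * f t ∂μ‖ = l2norm μ f from rfl,
      show Real.sqrt ‖∫ t, star (g t) * g t ∂μ‖ = l2norm μ g from rfl] at this
    nlinarith [this, l2norm_nonneg (μ := μ) f, l2norm_nonneg (μ := μ) g,
      norm_nonneg (∫ t, star (f t) * g t ∂μ)]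
  calc l2norm μ (fun t => f t + g t)
      = Real.sqrt ‖∫ t, star (f t + g t) * (f t + g t) ∂μ‖ := rfl
  _ ≤ Real.sqrt ((l2norm μ f + l2norm μ g)^2) := Real.sqrt_le_sqrt hnorm
  _ = l2norm μ f + l2norm μ g :=
      Real.sqrt_sq (add_nonneg (l2norm_nonneg f) (l2norm_nonneg g))

theorem l2norm_sub_le {f g : G → B} (hf : Nice f) (hg : Nice g) :
    l2norm μ (fun t => f t - g t) ≤ l2norm μ f + l2norm μ g := by
  have := l2norm_add_le (μ := μ) hf hg.neg
  simp only [sub_eq_add_neg]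
  rw [← l2norm_neg (μ := μ) g]
  exact this

theorem l2norm_mul_const {f : G → B} (hf : Nice f) (b : B) :
    l2norm μ (fun t => f t * b) ≤ l2norm μ f * ‖b‖ := by
  have hXi : Integrable (fun t => star (f t) * f t) μ := (hf.star_mul hf).integrable
  have expand : (fun t => star (f t * b) * (f t * b))
      = fun t => (star b * (star (f t) * f t)) * b := by
    funext t
    simp only [star_mul, mul_assoc]
  have hint : ∫ t, star (f t * b) * (f t * b) ∂μ
      = (star b * (∫ t, star (f t) * f t ∂μ)) * b := by
    rw [expand, int_mul_const (integ_const_mul hXi (star b)) b, int_const_mul hXi (star b)]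
  have hnorm : ‖∫ t, star (f t * b) * (f t * b) ∂μ‖
      ≤ ‖∫ t, star (f t) * f t ∂μ‖ * ‖b‖^2 := by
    rw [hint]
    calc ‖(star b * (∫ t, star (f t) * f t ∂μ)) * b‖
        ≤ ‖star b * (∫ t, star (f t) * f t ∂μ)‖ * ‖b‖ := norm_mul_le _ _
    _ ≤ (‖star b‖ * ‖∫ t, star (f t) * f t ∂μ‖) * ‖b‖ :=
        mul_le_mul_of_nonneg_right (norm_mul_le _ _) (norm_nonneg _)
    _ = ‖∫ t, star (f t) * f t ∂μ‖ * ‖b‖^2 := by rw [norm_star]; ring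
  calc l2norm μ (fun t => f t * b)
      = Real.sqrt ‖∫ t, star (f t * b) * (f t * b) ∂μ‖ := rfl
  _ ≤ Real.sqrt (‖∫ t, star (f t) * f t ∂μ‖ * ‖b‖^2) := Real.sqrt_le_sqrt hnorm
  _ = l2norm μ f * ‖b‖ := by
      rw [Real.sqrt_mul (norm_nonneg _), Real.sqrt_sq (norm_nonneg b)]; rfl

theorem l2norm_const_mul {f : G → B} (hf : Nice f) (b : B) :
    l2norm μ (fun t => b * f t) ≤ ‖b‖ * l2norm μ f := by
  set I := ∫ t, star (b * f t) * (b * f t) ∂μ with hI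
  have hbf : Nice (fun t => b * f t) := hf.const_mul b
  have hIn : 0 ≤ ((I : B) : Unitization ℂ B) := inr_int_self_nonneg hbf
  -- pointwise bound in the unitization
  set D : G → Unitization ℂ B := fun t =>
    (‖b‖^2) • (star ((f t : Unitization ℂ B)) * (f t : Unitization ℂ B))
      - star ((b * f t : B) : Unitization ℂ B) * ((b * f t : B) : Unitization ℂ B) with hD
  have hDnice : Nice D := by
    have n1 : Nice (fun t => star ((f t : Unitization ℂ B)) * (f t : Unitization ℂ B)) :=
      hf.inr.star_mul hf.inr
    have n2 : Nice (fun t =>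
        star ((b * f t : B) : Unitization ℂ B) * ((b * f t : B) : Unitization ℂ B)) :=
      hbf.inr.star_mul hbf.inr
    exact (n1.smul _).sub n2
  have hDpos : ∀ t, 0 ≤ D t := by
    intro t
    show (0:Unitization ℂ B) ≤ (‖b‖^2) • (star ((f t : Unitization ℂ B)) * (f t : Unitization ℂ B))
      - star ((b * f t : B) : Unitization ℂ B) * ((b * f t : B) : Unitization ℂ B)
    rw [sub_nonneg]
    have key : star ((f t : Unitization ℂ B)) * (star ((b : Unitization ℂ B))
          * (b : Unitization ℂ B)) * (f t : Unitization ℂ B)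
        ≤ ‖star ((b : Unitization ℂ B)) * (b : Unitization ℂ B)‖
            • (star ((f t : Unitization ℂ B)) * (f t : Unitization ℂ B)) :=
      CStarAlgebra.star_left_conjugate_le_norm_smul (IsSelfAdjoint.star_mul_self _)
    rw [CStarRing.norm_star_mul_self, Unitization.norm_inr, ← pow_two] at key
    calc star ((b * f t : B) : Unitization ℂ B) * ((b * f t : B) : Unitization ℂ B)
        = star ((f t : Unitization ℂ B)) * (star ((b : Unitization ℂ B))
            * (b : Unitization ℂ B)) * (f t : Unitization ℂ B) := by
          rw [Unitization.inr_mul, star_mul]; noncomm_ring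
    _ ≤ _ := key
  have hDint : 0 ≤ ∫ t, D t ∂μ := integral_nonneg_of_cpt hDnice.1 hDnice.2 hDpos
  have hDval : ∫ t, D t ∂μ = (‖b‖^2) • ((∫ t, star (f t) * f t ∂μ : B) : Unitization ℂ B)
      - ((I : B) : Unitization ℂ B) := by
    have i1 : Integrable (fun t => star ((f t : Unitization ℂ B)) * (f t : Unitization ℂ B)) μ :=
      (hf.inr.star_mul hf.inr).integrable
    have i1s : Integrable (fun t =>
        (‖b‖^2) • (star ((f t : Unitization ℂ B)) * (f t : Unitization ℂ B))) μ := by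
      have := i1.smul (‖b‖^2)
      simpa [Pi.smul_def] using this
    have i2 : Integrable (fun t =>
        star ((b * f t : B) : Unitization ℂ B) * ((b * f t : B) : Unitization ℂ B)) μ :=
      (hbf.inr.star_mul hbf.inr).integrable
    have h0 : ∫ t, D t ∂μ = ∫ t, ((‖b‖^2) • (star ((f t : Unitization ℂ B)) * (f t : Unitization ℂ B))
        - star ((b * f t : B) : Unitization ℂ B) * ((b * f t : B) : Unitization ℂ B)) ∂μ := rfl
    rw [h0, integral_sub i1s i2, integral_smul]
    congr 1
    · congr 1
      have : (fun t => star ((f t : Unitization ℂ B)) * (f t : Unitization ℂ B))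
          = fun t => (((star (f t) * f t : B)) : Unitization ℂ B) := by
        funext t; simp [Unitization.inr_mul, Unitization.inr_star]
      rw [this, integral_inr (hf.star_mul hf).integrable]
    · have : (fun t => star ((b * f t : B) : Unitization ℂ B) * ((b * f t : B) : Unitization ℂ B))
          = fun t => (((star (b * f t) * (b * f t) : B)) : Unitization ℂ B) := by
        funext t; simp [Unitization.inr_mul, Unitization.inr_star]
      rw [this, integral_inr (hbf.star_mul hbf).integrable, hI]
  rw [hDval, sub_nonneg] at hDint
  have hnorm : ‖I‖ ≤ ‖b‖^2 * ‖∫ t, star (f t) * f t ∂μ‖ := by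
    have := CStarAlgebra.norm_le_norm_of_nonneg_of_le hIn hDint
    rw [norm_smul, Real.norm_of_nonneg (by positivity), Unitization.norm_inr,
      Unitization.norm_inr] at this
    exact this
  calc l2norm μ (fun t => b * f t) = Real.sqrt ‖I‖ := rfl
  _ ≤ Real.sqrt (‖b‖^2 * ‖∫ t, star (f t) * f t ∂μ‖) := Real.sqrt_le_sqrt hnorm
  _ = ‖b‖ * l2norm μ f := by
      rw [Real.sqrt_mul (by positivity), Real.sqrt_sq (norm_nonneg b)]; rfl

theorem l2norm_equivariant (e : B ≃⋆ₐ[ℂ] B) (g : G) {F : G → B} (hF : Nice F) :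
    l2norm μ (fun h => e (F (g * h))) = l2norm μ F := by
  have expand : (fun h => star (e (F (g * h))) * e (F (g * h)))
      = fun h => e (star (F (g * h)) * F (g * h)) := by
    funext h
    rw [map_mul, map_star]
  have h1 : ∫ h, star (e (F (g * h))) * e (F (g * h)) ∂μ
      = e (∫ h, star (F h) * F h ∂μ) := by
    rw [expand]
    rw [show (fun h => e (star (F (g * h)) * F (g * h)))
        = (fun h => (fun t => e (star (F t) * F t)) (g * h)) from rfl]
    rw [integral_mul_left_eq_self (fun t => e (star (F t) * F t)) g]
    exact int_beta (hF.star_mul hF).integrable e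
  unfold l2norm
  rw [h1, StarAlgEquiv.norm_map]

end L2

theorem inr_snd_of_fst_zero {x : Unitization ℂ B} (hx : x.fst = 0) :
    ((x.snd : B) : Unitization ℂ B) = x := by
  conv_rhs => rw [← Unitization.inl_fst_add_inr_snd_eq x]
  rw [hx]
  simp

theorem cont_beta_inv (β : G → B ≃⋆ₐ[ℂ] B) (hβ_cont : ∀ b : B, Continuous fun g => β g b)
    {c : G → B} (hc : Continuous c) : Continuous (fun g => β g⁻¹ (c g)) := by
  rw [continuous_iff_continuousAt]
  intro g₀
  have h2 : Tendsto (fun g : G => β g⁻¹ (c g₀)) (nhds g₀) (nhds (β g₀⁻¹ (c g₀))) := by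
    have := (hβ_cont (c g₀)).comp (continuous_inv (G := G))
    exact this.tendsto g₀
  have h1 : Tendsto (fun g => β g⁻¹ (c g) - β g⁻¹ (c g₀)) (nhds g₀) (nhds 0) := by
    have hb : Tendsto (fun g => ‖c g - c g₀‖) (nhds g₀) (nhds 0) := by
      have := ((hc.tendsto g₀).sub (tendsto_const_nhds (x := c g₀))).norm
      simpa using this
    refine squeeze_zero_norm (fun g => ?_) hb
    rw [← map_sub, StarAlgEquiv.norm_map]
  have h3 := h1.add h2
  have : ContinuousAt (fun g => β g⁻¹ (c g)) g₀ := by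
    unfold ContinuousAt
    simpa using h3
  exact this

/-- Let `β : G → Aut(B)` be an action, `u` a norm-continuous `β`-cocycle
with values in the unitaries `1 + B` of the unitization.  If a net `(ζ_i)_{i}` in `C_c(G,B)`
witnesses amenability of `β` — i.e. `‖ζ_i‖₂ ≤ 1`, `⟨ζ_i, ζ_i⟩ a → a`,
`‖a ζ_i − ζ_i a‖₂ → 0`, and `max_{g ∈ K} ‖(ζ_i − β̄_g ζ_i) a‖₂ → 0` for all `a ∈ B` and
compact `K ⊆ G` — then the same net witnesses amenability of the perturbed action
`β^u_g = Ad(u_g) ∘ β_g`.  In particular, amenability of actions is preserved under cocycle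
perturbations. -/
theorem amenability_preserved_by_cocycle_perturbation
    (μ : Measure G) [μ.IsHaarMeasure]
    (β : G → B ≃⋆ₐ[ℂ] B)
    (hβ_one : ∀ b : B, β 1 b = b)
    (hβ_mul : ∀ g h : G, ∀ b : B, β (g * h) b = β g (β h b))
    (hβ_cont : ∀ b : B, Continuous fun g => β g b)
    (u : G → unitary (Unitization ℂ B))
    (hu_fst : ∀ g, (u g : Unitization ℂ B).fst = 1)
    (hu_cont : Continuous fun g => (u g : Unitization ℂ B))
    (hu_cocycle : ∀ g h : G, (u (g * h) : Unitization ℂ B) =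
      (u g : Unitization ℂ B) *
        (1 + ((β g ((u h : Unitization ℂ B).snd) : B) : Unitization ℂ B)))
    {ι : Type*} (l : Filter ι) [l.NeBot]
    (ζ : ι → G → B)
    (hζ_cont : ∀ i, Continuous (ζ i) ∧ HasCompactSupport (ζ i))
    (hζ_norm : ∀ i, l2norm μ (ζ i) ≤ 1)
    (hζ_appunit : ∀ a : B,
      Tendsto (fun i => (∫ t, star (ζ i t) * ζ i t ∂μ) * a) l (nhds a))
    (hζ_central : ∀ a : B,
      Tendsto (fun i => l2norm μ (fun t => a * ζ i t - ζ i t * a)) l (nhds 0))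
    (hζ_inv : ∀ a : B, ∀ K : Set G, IsCompact K → ∀ ε > 0,
      ∀ᶠ i in l, ∀ g ∈ K,
        l2norm μ (fun h => (ζ i h - β g (ζ i (g⁻¹ * h))) * a) ≤ ε) :
    (∀ i, l2norm μ (ζ i) ≤ 1) ∧
    (∀ a : B, Tendsto (fun i => (∫ t, star (ζ i t) * ζ i t ∂μ) * a) l (nhds a)) ∧
    (∀ a : B, Tendsto (fun i => l2norm μ (fun t => a * ζ i t - ζ i t * a)) l (nhds 0)) ∧
    (∀ a : B, ∀ K : Set G, IsCompact K → ∀ ε > 0,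
      ∀ᶠ i in l, ∀ g ∈ K,
        l2norm μ (fun h => (ζ i h - perturbedAction β u g (ζ i (g⁻¹ * h))) * a) ≤ ε) := by
  classical
  refine ⟨hζ_norm, hζ_appunit, hζ_central, ?_⟩
  intro a K hK ε hε
  set c : G → B := fun g => ((u g : Unitization ℂ B)).snd with hc
  have hc_cont : Continuous c := by
    have hsnd : Continuous (fun x : Unitization ℂ B => x.snd) :=
      continuous_snd.comp (Unitization.uniformEquivProd (𝕜 := ℂ) (A := B)).continuous
    exact hsnd.comp hu_cont
  set sfun : G → B := fun g => β g⁻¹ (c g) with hsfun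
  have hsfun_cont : Continuous sfun := cont_beta_inv β hβ_cont hc_cont
  have hS : IsCompact (sfun '' K) := hK.image hsfun_cont
  -- uniform centrality over the compact set `sfun '' K`
  have hunif : ∀ ε' > (0:ℝ), ∀ᶠ i in l, ∀ s ∈ sfun '' K,
      l2norm μ (fun t => s * ζ i t - ζ i t * s) ≤ ε' := by
    intro ε' hε'
    obtain ⟨T, hTfin, hTcover⟩ :=
      (Metric.totallyBounded_iff).mp hS.totallyBounded (ε'/4) (by positivity)
    have hev : ∀ᶠ i in l, ∀ y ∈ T, l2norm μ (fun t => y * ζ i t - ζ i t * y) ≤ ε'/4 := by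
      rw [eventually_all_finite hTfin]
      intro y hy
      exact (hζ_central y).eventually (eventually_le_nhds (by positivity))
    filter_upwards [hev] with i hi s hs
    obtain ⟨y, hyT, hdy⟩ := Set.mem_iUnion₂.mp (hTcover hs)
    rw [Metric.mem_ball, dist_eq_norm] at hdy
    have hζn : Nice (ζ i) := hζ_cont i
    have hid : (fun t => s * ζ i t - ζ i t * s)
        = fun t => (y * ζ i t - ζ i t * y) + ((s - y) * ζ i t - ζ i t * (s - y)) := by
      funext t
      simp only [sub_mul, mul_sub]
      abel
    rw [hid]
    have n1 : Nice (fun t => y * ζ i t - ζ i t * y) := (hζn.const_mul y).sub (hζn.mul_const y)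
    have n2a : Nice (fun t => (s - y) * ζ i t) := hζn.const_mul _
    have n2b : Nice (fun t => ζ i t * (s - y)) := hζn.mul_const _
    have step1 := l2norm_add_le (μ := μ) n1 (n2a.sub n2b)
    have step2 := l2norm_sub_le (μ := μ) n2a n2b
    have b1 := l2norm_const_mul (μ := μ) hζn (s - y)
    have b2 := l2norm_mul_const (μ := μ) hζn (s - y)
    have hζ1 := hζ_norm i
    have hsy : ‖s - y‖ ≤ ε'/4 := le_of_lt hdy
    have hl2pos := l2norm_nonneg (μ := μ) (ζ i)
    have hb1' : l2norm μ (fun t => (s - y) * ζ i t) ≤ ε'/4 := by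
      refine le_trans b1 ?_
      nlinarith [norm_nonneg (s - y)]
    have hb2' : l2norm μ (fun t => ζ i t * (s - y)) ≤ ε'/4 := by
      refine le_trans b2 ?_
      nlinarith [norm_nonneg (s - y)]
    have := hi y hyT
    linarith
  have hev1 := hζ_inv a K hK (ε/2) (by positivity)
  have hev2 := hunif (ε/(2*(‖a‖+1))) (by positivity)
  filter_upwards [hev1, hev2] with i h1 h2
  intro g hg
  set U : Unitization ℂ B := (u g : Unitization ℂ B) with hU
  obtain ⟨hUst, hUts⟩ := Unitary.mem_iff.mp (u g).prop
  have hUnorm : ‖U‖ = 1 := by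
    have h := CStarRing.norm_star_mul_self (x := U)
    rw [hUst, norm_one] at h
    nlinarith [norm_nonneg U]
  set x' : B := (star U * ((a : B) : Unitization ℂ B)).snd with hx'
  have hx'eq : ((x' : B) : Unitization ℂ B) = star U * ((a : B) : Unitization ℂ B) := by
    apply inr_snd_of_fst_zero
    simp [Unitization.fst_mul, Unitization.fst_star, Unitization.fst_inr]
  have hx'norm : ‖x'‖ ≤ ‖a‖ := by
    rw [← Unitization.norm_inr (𝕜 := ℂ), hx'eq]
    calc ‖star U * ((a : B) : Unitization ℂ B)‖
        ≤ ‖star U‖ * ‖((a : B) : Unitization ℂ B)‖ := norm_mul_le _ _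
    _ = ‖a‖ := by rw [norm_star, hUnorm, Unitization.norm_inr, one_mul]
  set cg : B := sfun g with hcg
  set x'' : B := β g⁻¹ x' with hx''
  have hβinv : ∀ x : B, β g (β g⁻¹ x) = x := by
    intro x
    rw [← hβ_mul]
    rw [mul_inv_cancel]
    exact hβ_one x
  have hx''norm : ‖x''‖ ≤ ‖a‖ := by
    rw [hx'', StarAlgEquiv.norm_map]
    exact hx'norm
  have hcgb : β g cg = c g := hβinv (c g)
  have hβx'' : β g x'' = x' := hβinv x'
  have hUc : U = 1 + ((c g : B) : Unitization ℂ B) := by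
    conv_lhs => rw [← Unitization.inl_fst_add_inr_snd_eq U]
    rw [hU, hu_fst g]
    simp
    rfl
  have key_id : ∀ h', (ζ i h' - perturbedAction β u g (ζ i (g⁻¹ * h'))) * a
      = (ζ i h' - β g (ζ i (g⁻¹ * h'))) * a
        - β g ((cg * ζ i (g⁻¹*h') - ζ i (g⁻¹*h') * cg) * x'') := by
    intro h'
    apply Unitization.inr_injective (R := ℂ)
    set b := ζ i (g⁻¹ * h') with hb
    set z := ζ i h' with hz
    have hueq : ((perturbedAction β u g b : B) : Unitization ℂ B)
        = U * ((β g b : B) : Unitization ℂ B) * star U := by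
      rw [perturbedAction]
      apply inr_snd_of_fst_zero
      simp [Unitization.fst_mul, Unitization.fst_star, Unitization.fst_inr]
    have hsec : ((β g ((cg * b - b * cg) * x'') : B) : Unitization ℂ B)
        = (((c g : B) : Unitization ℂ B) * ((β g b : B) : Unitization ℂ B)
            - ((β g b : B) : Unitization ℂ B) * ((c g : B) : Unitization ℂ B))
          * (star U * ((a : B) : Unitization ℂ B)) := by
      rw [map_mul (β g), map_sub (β g), map_mul (β g), map_mul (β g), hcgb, hβx'',
        Unitization.inr_mul, Unitization.inr_sub, Unitization.inr_mul, Unitization.inr_mul,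
        hx'eq]
    have e1 : U * ((β g b : B) : Unitization ℂ B) * star U - ((β g b : B) : Unitization ℂ B)
        = (((c g : B) : Unitization ℂ B) * ((β g b : B) : Unitization ℂ B)
            - ((β g b : B) : Unitization ℂ B) * ((c g : B) : Unitization ℂ B)) * star U := by
      have hy : ((β g b : B) : Unitization ℂ B)
          = ((β g b : B) : Unitization ℂ B) * U * star U := by
        rw [mul_assoc, hUts, mul_one]
      calc U * ((β g b : B) : Unitization ℂ B) * star U - ((β g b : B) : Unitization ℂ B)
          = U * ((β g b : B) : Unitization ℂ B) * star U
            - ((β g b : B) : Unitization ℂ B) * U * star U := by rw [← hy]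
      _ = (U * ((β g b : B) : Unitization ℂ B)
            - ((β g b : B) : Unitization ℂ B) * U) * star U := by noncomm_ring
      _ = (((c g : B) : Unitization ℂ B) * ((β g b : B) : Unitization ℂ B)
            - ((β g b : B) : Unitization ℂ B) * ((c g : B) : Unitization ℂ B)) * star U := by
          rw [hUc]; noncomm_ring
    rw [Unitization.inr_mul, Unitization.inr_sub, hueq, Unitization.inr_sub,
      Unitization.inr_mul, Unitization.inr_sub, hsec]
    rw [← mul_assoc _ (star U) _, ← e1]
    noncomm_ring
  have hζn : Nice (ζ i) := hζ_cont i
  have hb_nice : Nice (fun h' => β g (ζ i (g⁻¹ * h'))) := (hζn.translate g⁻¹).beta (β g)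
  have n_first : Nice (fun h' => (ζ i h' - β g (ζ i (g⁻¹ * h'))) * a) :=
    (hζn.sub hb_nice).mul_const a
  have npsi : Nice (fun t => (cg * ζ i t - ζ i t * cg) * x'') :=
    ((hζn.const_mul cg).sub (hζn.mul_const cg)).mul_const x''
  have n_second : Nice (fun h' => β g ((cg * ζ i (g⁻¹*h') - ζ i (g⁻¹*h') * cg) * x'')) :=
    (npsi.translate g⁻¹).beta (β g)
  have hfeq : (fun h' => (ζ i h' - perturbedAction β u g (ζ i (g⁻¹ * h'))) * a)
      = fun h' => (ζ i h' - β g (ζ i (g⁻¹ * h'))) * a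
          - β g ((cg * ζ i (g⁻¹*h') - ζ i (g⁻¹*h') * cg) * x'') := funext key_id
  rw [hfeq]
  refine le_trans (l2norm_sub_le n_first n_second) ?_
  have hsecond : l2norm μ (fun h' => β g ((cg * ζ i (g⁻¹*h') - ζ i (g⁻¹*h') * cg) * x''))
      = l2norm μ (fun t => (cg * ζ i t - ζ i t * cg) * x'') :=
    l2norm_equivariant (β g) g⁻¹ npsi
  have hcomm : l2norm μ (fun t => cg * ζ i t - ζ i t * cg) ≤ ε/(2*(‖a‖+1)) :=
    h2 (sfun g) ⟨g, hg, rfl⟩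
  have hb2 := l2norm_mul_const (μ := μ) ((hζn.const_mul cg).sub (hζn.mul_const cg)) x''
  have hfirst : l2norm μ (fun h' => (ζ i h' - β g (ζ i (g⁻¹ * h'))) * a) ≤ ε/2 := h1 g hg
  have hsec2 : l2norm μ (fun t => (cg * ζ i t - ζ i t * cg) * x'') ≤ ε/2 := by
    refine le_trans hb2 ?_
    have hna : (0:ℝ) ≤ ‖a‖ := norm_nonneg a
    have hl2c : (0:ℝ) ≤ l2norm μ (fun t => cg * ζ i t - ζ i t * cg) := l2norm_nonneg _
    have hx''nn : (0:ℝ) ≤ ‖x''‖ := norm_nonneg _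
    have h6 : l2norm μ (fun t => cg * ζ i t - ζ i t * cg) * ‖x''‖
        ≤ (ε/(2*(‖a‖+1))) * ‖a‖ :=
      mul_le_mul hcomm hx''norm hx''nn (by positivity)
    refine le_trans h6 ?_
    rw [div_mul_eq_mul_div]
    rw [div_le_iff₀ (by positivity)]
    ring_nf
    nlinarith
  rw [hsecond]
  linarith
end

section
/- Let u ∈ U(H) be a unitary on an infinite-dimensional Hilbert space H, let ε > 0 with 2ε < ‖u − 1‖, and suppose a is an operator on the full Fock space H_F of the form a = λ_0·1 + ∑_{n=1}^N ∑_{m=1}^{k_n} ŝ(ξ_{1,m,n})⋯ŝ(ξ_{n,m,n}) ŝ(η_{n,m,n})*⋯ŝ(η_{1,m,n})* (a finite gauge-invariant sum of creation/annihilation words of equal length), where ŝ denotes creation operators. Then ‖a − U_F‖ > ε, where U_F = ⊕_{n≥0} U^{⊗n}. In particular, U_F is not in the norm closure of such finite sums when U ≠ 1. -/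
private lemma norm_eq_of_inner_eq_sq {E : Type*} [NormedAddCommGroup E] [InnerProductSpace ℂ E]
    (v : E) (r : ℝ) (hr : 0 ≤ r) (h : (inner ℂ v v : ℂ) = (r:ℂ)^2) : ‖v‖ = r := by
  have h5 := inner_self_eq_norm_sq (𝕜 := ℂ) (E := E) v
  rw [h] at h5
  have h3 : r^2 = ‖v‖^2 := by
    simpa [← Complex.ofReal_pow, RCLike.re_to_complex] using h5
  nlinarith [norm_nonneg v]

private lemma lp_single_sub {T : ℕ → Type*} [∀ n, NormedAddCommGroup (T n)]
    (p : ENNReal) (i : ℕ) (a b : T i) :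
    (lp.single p i (a - b) : lp T p) = lp.single p i a - lp.single p i b := by
  apply lp.ext
  funext j
  by_cases h : j = i
  · subst h
    simp [lp.single_apply_self]
  · simp [lp.single_apply_ne p i _ h]

private lemma rc_ofReal (a : ℝ) : (RCLike.ofReal (K := ℂ) a) = (a:ℂ) := rfl

/-- Let `u = U ∈ U(H)` be a unitary on an infinite-dimensional Hilbert
space `H`, let `ε > 0` with `2ε < ‖U − 1‖`, and suppose `a` is an operator on the full Fock
space `H_F` (axiomatized as in the previous statements: tensor powers `T n` with prepend maps
`τ` multiplicative for inner ℂ products, `H_F = lp T 2`, creation operators `S`) of the form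
`a = lam₀·1 + ∑_{n=1}^N ∑_{m=1}^{k_n} ŝ(ξ_{1,m,n})⋯ŝ(ξ_{n,m,n}) ŝ(η_{n,m,n})*⋯ŝ(η_{1,m,n})*`,
a finite gauge-invariant sum of creation/annihilation words of equal length.
Then `‖a − U_F‖ > ε`, where `U_F = ⊕_{n≥0} U^{⊗n}`.  In particular, `U_F` is not in the
norm closure of such finite sums when `U ≠ 1`. -/
theorem fock_gauge_invariant_sum_far_from_second_quantization
    {H : Type*} [NormedAddCommGroup H] [InnerProductSpace ℂ H] [CompleteSpace H]
    (hinf : ¬ FiniteDimensional ℂ H)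
    (T : ℕ → Type*) [∀ n, NormedAddCommGroup (T n)] [∀ n, InnerProductSpace ℂ (T n)]
    [∀ n, CompleteSpace (T n)]
    (τ : (n : ℕ) → H → T n → T (n + 1))
    (hτ_inner : ∀ (n : ℕ) (ξ η : H) (x y : T n),
      (inner ℂ (τ n ξ x) (τ n η y) : ℂ) = (inner ℂ ξ η : ℂ) * (inner ℂ x y : ℂ))
    (v₀ : T 0) (hv₀ : (inner ℂ v₀ v₀ : ℂ) = 1)
    (S : H → (lp T 2 →L[ℂ] lp T 2))
    (hS : ∀ (ξ : H) (n : ℕ) (x : T n),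
      S ξ (lp.single 2 n x) = lp.single 2 (n + 1) (τ n ξ x))
    (U : H →L[ℂ] H) (hU : U ∈ unitary (H →L[ℂ] H))
    (W : (n : ℕ) → T n ≃ₗᵢ[ℂ] T n)
    (hW0 : ∀ y : T 0, W 0 y = y)
    (hWsucc : ∀ (n : ℕ) (ξ : H) (x : T n), W (n + 1) (τ n ξ x) = τ n (U ξ) (W n x))
    (UF : lp T 2 →L[ℂ] lp T 2) (hUF_mem : UF ∈ unitary (lp T 2 →L[ℂ] lp T 2))
    (hUF : ∀ (n : ℕ) (x : T n), UF (lp.single 2 n x) = lp.single 2 n (W n x))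
    (ε : ℝ) (hε : 2 * ε < ‖U - 1‖)
    (lam₀ : ℂ) (N : ℕ) (k : ℕ → ℕ) (ξv ηv : ℕ → ℕ → ℕ → H) :
    ε < ‖(lam₀ • (1 : lp T 2 →L[ℂ] lp T 2) +
        ∑ n ∈ Finset.Icc 1 N, ∑ m ∈ Finset.range (k n),
          ((List.range n).map fun ℓ => S (ξv n m ℓ)).prod *
            star (((List.range n).map fun ℓ => S (ηv n m ℓ)).prod)) - UF‖ := by
  classical
  rcases lt_or_ge ε 0 with hε0 | hε0
  · exact lt_of_lt_of_le hε0 (norm_nonneg _)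
  -- a unit vector moved by more than 2ε
  obtain ⟨y, hy1, hy2⟩ := ContinuousLinearMap.exists_lt_apply_of_lt_opNorm (U - 1) hε
  have hy0 : y ≠ 0 := by
    intro h
    rw [h, map_zero, norm_zero] at hy2
    linarith
  set x : H := ‖y‖⁻¹ • y with hxdef
  have hxnorm : ‖x‖ = 1 := norm_smul_inv_norm hy0
  have hx2 : 2 * ε < ‖U x - x‖ := by
    have he : U x - x = ‖y‖⁻¹ • (U y - y) := by
      rw [hxdef, ContinuousLinearMap.map_smul_of_tower, ← smul_sub]
    have hyy : (0:ℝ) < ‖y‖ := norm_pos_iff.mpr hy0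
    have h1 : ‖U y - y‖ ≤ ‖y‖⁻¹ * ‖U y - y‖ := by
      have : (1:ℝ) ≤ ‖y‖⁻¹ := by
        rw [le_inv_comm₀] <;> simp [hyy, hy1.le]
      nlinarith [norm_nonneg (U y - y)]
    have h2 : (U - 1) y = U y - y := by
      simp [ContinuousLinearMap.sub_apply]
    rw [he, norm_smul, norm_inv, norm_norm]
    rw [h2] at hy2
    linarith
  -- a unit vector orthogonal to all the leading annihilation vectors
  set F : Finset H := (Finset.Icc 1 N ×ˢ Finset.range ((Finset.Icc 1 N).sup k)).image
      (fun p => ηv p.1 p.2 0) with hF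
  set K : Submodule ℂ H := Submodule.span ℂ (F : Set H) with hK
  haveI : FiniteDimensional ℂ K := FiniteDimensional.span_finset ℂ F
  have hKne : K ≠ ⊤ := by
    intro h
    apply hinf
    have : FiniteDimensional ℂ (⊤ : Submodule ℂ H) := by rw [← h]; infer_instance
    exact (Submodule.topEquiv (R := ℂ) (M := H)).finiteDimensional
  have hKbot : Kᗮ ≠ ⊥ := by
    rw [Ne, Submodule.orthogonal_eq_bot_iff]
    exact hKne
  obtain ⟨z, hzK, hz0⟩ := Submodule.exists_mem_ne_zero_of_ne_bot hKbot
  set x₁ : H := ‖z‖⁻¹ • z with hx₁def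
  have hx₁K : x₁ ∈ Kᗮ := Kᗮ.smul_mem _ hzK
  have hx₁norm : ‖x₁‖ = 1 := norm_smul_inv_norm hz0
  have hx₁orth : ∀ n ∈ Finset.Icc 1 N, ∀ m ∈ Finset.range (k n),
      (inner ℂ x₁ (ηv n m 0) : ℂ) = 0 := by
    intro n hn m hm
    have hmem : ηv n m 0 ∈ K := by
      apply Submodule.subset_span
      rw [hF]
      simp only [Finset.coe_image, Set.mem_image]
      refine ⟨(n, m), ?_, rfl⟩
      simp only [Finset.coe_product, Set.mem_prod, Finset.mem_coe]
      refine ⟨hn, Finset.mem_range.mpr ?_⟩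
      exact lt_of_lt_of_le (Finset.mem_range.mp hm) (Finset.le_sup hn)
    rw [← inner_conj_symm]
    rw [(Submodule.mem_orthogonal K x₁).mp hx₁K _ hmem]
    simp
  -- inner products of singles
  have hsing_inner : ∀ (nn : ℕ) (aa bb : T nn),
      (inner ℂ (lp.single 2 nn aa : lp T 2) (lp.single 2 nn bb : lp T 2) : ℂ) = inner ℂ aa bb := by
    intro nn aa bb
    rw [lp.inner_single_left, lp.single_apply_self]
  have hsingle_norm : ∀ (nn : ℕ) (aa : T nn), ‖(lp.single 2 nn aa : lp T 2)‖ = ‖aa‖ := by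
    intro nn aa
    refine norm_eq_of_inner_eq_sq _ _ (norm_nonneg _) ?_
    rw [hsing_inner]
    exact inner_self_eq_norm_sq_to_K aa
  -- the annihilation lemma
  have hkill : ∀ (η : H) (v : lp T 2),
      (∀ (j : ℕ) (yy : T j), (inner ℂ v (lp.single 2 (j+1) (τ j η yy) : lp T 2) : ℂ) = 0) →
      (star (S η)) v = 0 := by
    intro η v hv
    rw [ContinuousLinearMap.star_eq_adjoint]
    refine ext_inner_right ℂ fun w => ?_
    rw [ContinuousLinearMap.adjoint_inner_left, inner_zero_left]
    have hsum := lp.hasSum_single (E := T) (p := 2) (by norm_num) w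
    have hmap := hsum.mapL ((innerSL ℂ v).comp (S η))
    have hz : ∀ j : ℕ, ((innerSL ℂ v).comp (S η)) (lp.single 2 j (w j)) = 0 := by
      intro j
      simp only [ContinuousLinearMap.coe_comp', Function.comp_apply, innerSL_apply_apply, hS]
      exact hv j (w j)
    rw [funext hz] at hmap
    have := hasSum_zero (α := ℂ) (β := ℕ) (L := SummationFilter.unconditional ℕ)
    have h0 := hmap.unique hasSum_zero
    simpa using h0
  -- the test vectors
  set z₁ : T 1 := τ 0 x₁ v₀ with hz₁
  set u : T 1 := τ 0 x v₀ with hu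
  set u' : T 1 := τ 0 (U x) v₀ with hu'
  set z₂ : T 2 := τ 1 x₁ u with hz₂
  set v₁ : lp T 2 := lp.single 2 1 z₁ with hv₁
  set v₂ : lp T 2 := lp.single 2 2 z₂ with hv₂
  -- kill conditions
  have hkill₁ : ∀ n ∈ Finset.Icc 1 N, ∀ m ∈ Finset.range (k n),
      (star (S (ηv n m 0))) v₁ = 0 := by
    intro n hn m hm
    refine hkill _ _ fun j yy => ?_
    rw [hv₁, lp.inner_single_left]
    rcases j with _ | j
    · rw [lp.single_apply_self]
      rw [hz₁, hτ_inner, hx₁orth n hn m hm, zero_mul]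
    · rw [lp.single_apply_ne 2 _ _ (by omega : (1:ℕ) ≠ j + 1 + 1), inner_zero_right]
  have hkill₂ : ∀ n ∈ Finset.Icc 1 N, ∀ m ∈ Finset.range (k n),
      (star (S (ηv n m 0))) v₂ = 0 := by
    intro n hn m hm
    refine hkill _ _ fun j yy => ?_
    rw [hv₂, lp.inner_single_left]
    rcases j with _ | _ | j
    · rw [lp.single_apply_ne 2 _ _ (by omega : (2:ℕ) ≠ 0 + 1), inner_zero_right]
    · rw [lp.single_apply_self]
      rw [hz₂, hτ_inner, hx₁orth n hn m hm, zero_mul]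
    · rw [lp.single_apply_ne 2 _ _ (by omega : (2:ℕ) ≠ j + 1 + 1 + 1), inner_zero_right]
  -- the sum term annihilates v₁ and v₂
  have hterm : ∀ v : lp T 2,
      (∀ n ∈ Finset.Icc 1 N, ∀ m ∈ Finset.range (k n), (star (S (ηv n m 0))) v = 0) →
      (∑ n ∈ Finset.Icc 1 N, ∑ m ∈ Finset.range (k n),
          ((List.range n).map fun ℓ => S (ξv n m ℓ)).prod *
            star (((List.range n).map fun ℓ => S (ηv n m ℓ)).prod)) v = 0 := by
    intro v hv
    rw [ContinuousLinearMap.sum_apply]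
    refine Finset.sum_eq_zero fun n hn => ?_
    rw [ContinuousLinearMap.sum_apply]
    refine Finset.sum_eq_zero fun m hm => ?_
    have h1 : 1 ≤ n := (Finset.mem_Icc.mp hn).1
    obtain ⟨n', rfl⟩ : ∃ n', n = n' + 1 := ⟨n - 1, by omega⟩
    simp only [List.range_succ_eq_map, List.map_cons, List.prod_cons, star_mul,
      ContinuousLinearMap.mul_apply]
    rw [hv _ hn _ hm]
    simp
  -- inner/norm expansion lemmas for τ
  have hA : ∀ (nn : ℕ) (c : ℂ) (ξ ζ : H) (uu : T nn),
      (inner ℂ (c • τ nn ξ uu - τ nn ζ uu) (c • τ nn ξ uu - τ nn ζ uu) : ℂ) =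
        (inner ℂ (c • ξ - ζ) (c • ξ - ζ) : ℂ) * (inner ℂ uu uu : ℂ) := by
    intro nn c ξ ζ uu
    simp only [inner_sub_left, inner_sub_right, inner_smul_left, inner_smul_right, hτ_inner]
    ring
  have hB : ∀ (nn : ℕ) (ζ : H) (uu ww : T nn),
      (inner ℂ (τ nn ζ uu - τ nn ζ ww) (τ nn ζ uu - τ nn ζ ww) : ℂ) =
        (inner ℂ ζ ζ : ℂ) * (inner ℂ (uu - ww) (uu - ww) : ℂ) := by
    intro nn ζ uu ww
    simp only [inner_sub_left, inner_sub_right, hτ_inner]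
    ring
  have hv₀norm : ‖v₀‖ = 1 :=
    norm_eq_of_inner_eq_sq v₀ 1 zero_le_one (by rw [hv₀]; norm_num)
  have htau_norm : ∀ (nn : ℕ) (ξ : H) (uu : T nn), ‖τ nn ξ uu‖ = ‖ξ‖ * ‖uu‖ := by
    intro nn ξ uu
    refine norm_eq_of_inner_eq_sq _ _ (by positivity) ?_
    rw [hτ_inner, inner_self_eq_norm_sq_to_K, inner_self_eq_norm_sq_to_K]
    simp only [rc_ofReal]
    push_cast
    ring
  have hAnorm : ∀ (nn : ℕ) (c : ℂ) (ξ ζ : H) (uu : T nn), ‖uu‖ = 1 →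
      ‖c • τ nn ξ uu - τ nn ζ uu‖ = ‖c • ξ - ζ‖ := by
    intro nn c ξ ζ uu huu
    refine norm_eq_of_inner_eq_sq _ _ (norm_nonneg _) ?_
    rw [hA]
    have h1 : (inner ℂ uu uu : ℂ) = 1 := by
      rw [inner_self_eq_norm_sq_to_K (𝕜 := ℂ) uu, huu]
      norm_num
    rw [h1, mul_one]
    exact inner_self_eq_norm_sq_to_K _
  have hA'norm : ∀ (nn : ℕ) (ξ ζ : H) (uu : T nn), ‖uu‖ = 1 →
      ‖τ nn ξ uu - τ nn ζ uu‖ = ‖ξ - ζ‖ := by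
    intro nn ξ ζ uu huu
    have := hAnorm nn 1 ξ ζ uu huu
    rwa [one_smul, one_smul] at this
  have hBnorm : ∀ (nn : ℕ) (ζ : H) (uu ww : T nn), ‖ζ‖ = 1 →
      ‖τ nn ζ uu - τ nn ζ ww‖ = ‖uu - ww‖ := by
    intro nn ζ uu ww hζ
    refine norm_eq_of_inner_eq_sq _ _ (norm_nonneg _) ?_
    rw [hB]
    have h1 : (inner ℂ ζ ζ : ℂ) = 1 := by
      rw [inner_self_eq_norm_sq_to_K (𝕜 := ℂ) ζ, hζ]
      norm_num
    rw [h1, one_mul]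
    exact inner_self_eq_norm_sq_to_K _
  -- U preserves inner products and norms
  have hUinner : ∀ a b : H, (inner ℂ (U a) (U b) : ℂ) = inner ℂ a b := by
    intro a b
    have h2 : (ContinuousLinearMap.adjoint U) (U a) = a := by
      rw [← ContinuousLinearMap.star_eq_adjoint, ← ContinuousLinearMap.mul_apply, hU.1,
        ContinuousLinearMap.one_apply]
    rw [← ContinuousLinearMap.adjoint_inner_left, h2]
  have hUnorm : ∀ a : H, ‖U a‖ = ‖a‖ := by
    intro a
    refine norm_eq_of_inner_eq_sq _ _ (norm_nonneg _) ?_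
    rw [hUinner]
    exact inner_self_eq_norm_sq_to_K _
  -- norms of test vectors
  have hx₁in : ‖U x₁‖ = 1 := by rw [hUnorm, hx₁norm]
  have hunorm : ‖u‖ = 1 := by rw [hu, htau_norm, hxnorm, hv₀norm, one_mul]
  have hv₁norm : ‖v₁‖ = 1 := by
    rw [hv₁, hsingle_norm, hz₁, htau_norm, hx₁norm, hv₀norm, one_mul]
  have hv₂norm : ‖v₂‖ = 1 := by
    rw [hv₂, hsingle_norm, hz₂, htau_norm, hx₁norm, hunorm, one_mul]
  -- apply the operator
  set Aop : lp T 2 →L[ℂ] lp T 2 := lam₀ • (1 : lp T 2 →L[ℂ] lp T 2) +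
      ∑ n ∈ Finset.Icc 1 N, ∑ m ∈ Finset.range (k n),
        ((List.range n).map fun ℓ => S (ξv n m ℓ)).prod *
          star (((List.range n).map fun ℓ => S (ηv n m ℓ)).prod) with hAop
  have happ : ∀ v : lp T 2,
      (∀ n ∈ Finset.Icc 1 N, ∀ m ∈ Finset.range (k n), (star (S (ηv n m 0))) v = 0) →
      (Aop - UF) v = lam₀ • v - UF v := by
    intro v hv
    rw [ContinuousLinearMap.sub_apply, hAop, ContinuousLinearMap.add_apply,
      ContinuousLinearMap.smul_apply, ContinuousLinearMap.one_apply, hterm v hv, add_zero]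
  have hUFv₁ : UF v₁ = lp.single 2 1 (τ 0 (U x₁) v₀) := by
    rw [hv₁, hUF]
    congr 1
    rw [hz₁, hWsucc, hW0]
  have hUFv₂ : UF v₂ = lp.single 2 2 (τ 1 (U x₁) u') := by
    rw [hv₂, hUF]
    congr 1
    rw [hz₂, hWsucc, hu, hWsucc, hW0, hu']
  -- level-1 estimate
  have hd₁ : ‖(Aop - UF) v₁‖ = ‖lam₀ • x₁ - U x₁‖ := by
    rw [happ v₁ hkill₁, hUFv₁, hv₁, ← lp.single_smul, ← lp_single_sub, hsingle_norm, hz₁]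
    exact hAnorm 0 lam₀ x₁ (U x₁) v₀ hv₀norm
  have hd₁' : ‖lam₀ • x₁ - U x₁‖ ≤ ‖Aop - UF‖ := by
    rw [← hd₁]
    calc ‖(Aop - UF) v₁‖ ≤ ‖Aop - UF‖ * ‖v₁‖ := (Aop - UF).le_opNorm v₁
    _ = ‖Aop - UF‖ := by rw [hv₁norm, mul_one]
  -- level-2 estimate
  have hd₂ : ‖(Aop - UF) v₂‖ = ‖lam₀ • z₂ - τ 1 (U x₁) u'‖ := by
    rw [happ v₂ hkill₂, hUFv₂, hv₂, ← lp.single_smul, ← lp_single_sub, hsingle_norm]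
  have hsplit : lam₀ • z₂ - τ 1 (U x₁) u' =
      (lam₀ • z₂ - τ 1 (U x₁) u) + (τ 1 (U x₁) u - τ 1 (U x₁) u') := by abel
  have hfirst : ‖lam₀ • z₂ - τ 1 (U x₁) u‖ = ‖lam₀ • x₁ - U x₁‖ := by
    rw [hz₂]
    exact hAnorm 1 lam₀ x₁ (U x₁) u hunorm
  have hsecond : ‖τ 1 (U x₁) u - τ 1 (U x₁) u'‖ = ‖x - U x‖ := by
    rw [hBnorm 1 (U x₁) u u' hx₁in, hu, hu']
    exact hA'norm 0 x (U x) v₀ hv₀norm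
  have htriangle : ‖x - U x‖ - ‖lam₀ • x₁ - U x₁‖ ≤ ‖lam₀ • z₂ - τ 1 (U x₁) u'‖ := by
    have h1 : ‖τ 1 (U x₁) u - τ 1 (U x₁) u'‖ ≤
        ‖lam₀ • z₂ - τ 1 (U x₁) u'‖ + ‖lam₀ • z₂ - τ 1 (U x₁) u‖ := by
      have h2 : τ 1 (U x₁) u - τ 1 (U x₁) u' =
          (lam₀ • z₂ - τ 1 (U x₁) u') - (lam₀ • z₂ - τ 1 (U x₁) u) := by abel
      rw [h2]
      exact norm_sub_le _ _
    rw [hsecond, hfirst] at h1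
    linarith
  have hle₂ : ‖(Aop - UF) v₂‖ ≤ ‖Aop - UF‖ := by
    calc ‖(Aop - UF) v₂‖ ≤ ‖Aop - UF‖ * ‖v₂‖ := (Aop - UF).le_opNorm v₂
    _ = ‖Aop - UF‖ := by rw [hv₂norm, mul_one]
  have hxswap : ‖x - U x‖ = ‖U x - x‖ := norm_sub_rev _ _
  rw [hd₂] at hle₂
  linarith
end

section
/- Let B be a C*-algebra with action β of a group G, let s_n ∈ B be contractions and r_{1,n}, r_{2,n} ∈ M(B) be β-invariant isometries with r_{1,n} r_{1,n}* + r_{2,n} r_{2,n}* = 1. Then S_n = r_{1,n} s_n + r_{2,n}(1 − s_n* s_n)^{1/2} is an isometry in M(B). Moreover, if max_{g∈K} ‖s_n* s_n − β_g(s_n* s_n)‖ → 0 for every compact K ⊆ G, then S_n − β_g(S_n) and s_n − β_g(s_n) agree asymptotically: ‖(S_n − β_g(S_n)) − (s_n − β_g(s_n))‖ → 0 uniformly for g ∈ K. -/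
open Filter Polynomial

section Aux

variable {A : Type*} [CStarAlgebra A]

lemma aux_norm_pow_le [Nontrivial A] {x : A} (hx : ‖x‖ ≤ 1) (k : ℕ) : ‖x ^ k‖ ≤ 1 := by
  induction k with
  | zero => simp
  | succ k ih =>
    rw [pow_succ]
    calc ‖x ^ k * x‖ ≤ ‖x ^ k‖ * ‖x‖ := norm_mul_le _ _
    _ ≤ 1 * 1 := mul_le_mul ih hx (norm_nonneg _) zero_le_one
    _ = 1 := one_mul 1

lemma aux_pow_diff [Nontrivial A] {x y : A} (hx : ‖x‖ ≤ 1) (hy : ‖y‖ ≤ 1) (k : ℕ) :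
    ‖x ^ k - y ^ k‖ ≤ k * ‖x - y‖ := by
  induction k with
  | zero => simp
  | succ k ih =>
    have : x ^ (k+1) - y ^ (k+1) = x ^ k * (x - y) + (x ^ k - y ^ k) * y := by
      noncomm_ring
    rw [this]
    calc ‖x ^ k * (x - y) + (x ^ k - y ^ k) * y‖
        ≤ ‖x ^ k * (x - y)‖ + ‖(x ^ k - y ^ k) * y‖ := norm_add_le _ _
      _ ≤ ‖x ^ k‖ * ‖x - y‖ + ‖x ^ k - y ^ k‖ * ‖y‖ :=
          add_le_add (norm_mul_le _ _) (norm_mul_le _ _)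
      _ ≤ 1 * ‖x - y‖ + (k * ‖x - y‖) * 1 :=
          add_le_add (mul_le_mul_of_nonneg_right (aux_norm_pow_le hx k) (norm_nonneg _))
            (mul_le_mul ih hy (norm_nonneg _) (by positivity))
      _ = (k + 1 : ℕ) * ‖x - y‖ := by push_cast; ring

lemma aux_aeval_diff [Nontrivial A] (p : ℝ[X]) {x y : A} (hx : ‖x‖ ≤ 1) (hy : ‖y‖ ≤ 1) :
    ‖aeval x p - aeval y p‖ ≤
      (∑ i ∈ Finset.range (p.natDegree + 1), ‖p.coeff i‖ * i) * ‖x - y‖ := by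
  rw [aeval_eq_sum_range, aeval_eq_sum_range, ← Finset.sum_sub_distrib]
  calc ‖∑ i ∈ Finset.range (p.natDegree + 1), (p.coeff i • x ^ i - p.coeff i • y ^ i)‖
      ≤ ∑ i ∈ Finset.range (p.natDegree + 1), ‖p.coeff i • x ^ i - p.coeff i • y ^ i‖ :=
        norm_sum_le _ _
    _ ≤ ∑ i ∈ Finset.range (p.natDegree + 1), ‖p.coeff i‖ * (i * ‖x - y‖) := by
        refine Finset.sum_le_sum fun i _ => ?_
        rw [← smul_sub, norm_smul]
        exact mul_le_mul_of_nonneg_left (aux_pow_diff hx hy i) (norm_nonneg _)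
    _ = (∑ i ∈ Finset.range (p.natDegree + 1), ‖p.coeff i‖ * i) * ‖x - y‖ := by
        rw [Finset.sum_mul]
        exact Finset.sum_congr rfl fun i _ => by ring

variable [PartialOrder A] [StarOrderedRing A]

lemma aux_sqrt_eq_real_cfc {x : A} (hx : 0 ≤ x) : CFC.sqrt x = cfc Real.sqrt x := by
  rw [CFC.sqrt_eq_cfc, cfc_nnreal_eq_real _ x hx]
  congr 1; funext t; rw [Real.sqrt]

lemma aux_sqrt_cont [Nontrivial A] {δ : ℝ} (hδ : 0 < δ) :
    ∃ δ' > 0, ∀ x y : A, 0 ≤ x → 0 ≤ y → ‖x‖ ≤ 1 → ‖y‖ ≤ 1 → ‖x - y‖ ≤ δ' →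
      ‖CFC.sqrt x - CFC.sqrt y‖ ≤ δ := by
  obtain ⟨p, hp⟩ := exists_polynomial_near_of_continuousOn 0 1 Real.sqrt
    (Real.continuous_sqrt.continuousOn) (δ/3) (by positivity)
  set C : ℝ := ∑ i ∈ Finset.range (p.natDegree + 1), ‖p.coeff i‖ * i with hC
  have hC0 : 0 ≤ C := Finset.sum_nonneg fun i _ => by positivity
  refine ⟨δ / (3 * (C + 1)), by positivity, fun x y hx hy hnx hny hxy => ?_⟩
  have hspec : ∀ z : A, 0 ≤ z → ‖z‖ ≤ 1 → ∀ t ∈ spectrum ℝ z, t ∈ Set.Icc (0:ℝ) 1 := by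
    intro z hz hnz t ht
    exact ⟨spectrum_nonneg_of_nonneg hz ht,
      (Real.le_norm_self t).trans ((spectrum.norm_le_norm_of_mem ht).trans hnz)⟩
  have key : ∀ z : A, 0 ≤ z → ‖z‖ ≤ 1 → ‖CFC.sqrt z - aeval z p‖ ≤ δ/3 := by
    intro z hz hnz
    have hsa : IsSelfAdjoint z := .of_nonneg hz
    rw [aux_sqrt_eq_real_cfc hz, ← cfc_polynomial p z, ← cfc_sub _ _ z]
    refine norm_cfc_le (by positivity) fun t ht => ?_
    obtain ⟨ht0, ht1⟩ := hspec z hz hnz t ht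
    have := hp t ⟨ht0, ht1⟩
    rw [Real.norm_eq_abs, abs_sub_comm]
    exact this.le
  have haeval : ‖aeval x p - aeval y p‖ ≤ C * ‖x - y‖ := aux_aeval_diff p hnx hny
  calc ‖CFC.sqrt x - CFC.sqrt y‖
      = ‖(CFC.sqrt x - aeval x p) + (aeval x p - aeval y p) + (aeval y p - CFC.sqrt y)‖ := by
        congr 1; abel
    _ ≤ ‖CFC.sqrt x - aeval x p‖ + ‖aeval x p - aeval y p‖ + ‖aeval y p - CFC.sqrt y‖ :=
        norm_add₃_le
    _ ≤ δ/3 + C * ‖x - y‖ + δ/3 := by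
        refine add_le_add (add_le_add (key x hx hnx) haeval) ?_
        rw [norm_sub_rev]
        exact key y hy hny
    _ ≤ δ/3 + C * (δ / (3 * (C + 1))) + δ/3 := by gcongr
    _ ≤ δ/3 + δ/3 + δ/3 := by
        gcongr δ/3 + ?_ + δ/3
        rw [← mul_div_assoc, div_le_div_iff₀ (by positivity) (by positivity)]
        nlinarith
    _ = δ := by ring

end Aux

/-- Let `B` be a C*-algebra with an action `β` of a group `G` (realized on
the unital algebra `M = M(B)`), let `s_n ∈ B` be contractions and `r_{1,n}, r_{2,n} ∈ M(B)`
`β`-invariant isometries with `r_{1,n}r_{1,n}* + r_{2,n}r_{2,n}* = 1`, chosen (as in the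
proof of Lemma 2.2 of the paper) so that `‖(1 − r_{1,n}) s_n‖ → 0`.  Then
`S_n = r_{1,n} s_n + r_{2,n} (1 − s_n* s_n)^{1/2}` is an isometry in `M(B)`.  Moreover, if
`max_{g ∈ K} ‖s_n* s_n − β_g(s_n* s_n)‖ → 0` for every compact `K ⊆ G`, then
`‖(S_n − β_g(S_n)) − (s_n − β_g(s_n))‖ → 0` uniformly for `g ∈ K`, for every compact `K`. -/
theorem isometry_correction_lemma
    {G : Type*} [Group G] [TopologicalSpace G]
    {M : Type*} [CStarAlgebra M] [PartialOrder M] [StarOrderedRing M]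
    (β : G → M ≃⋆ₐ[ℂ] M)
    (s : ℕ → M) (hs : ∀ n, ‖s n‖ ≤ 1)
    (r₁ r₂ : ℕ → M)
    (h1 : ∀ n, star (r₁ n) * r₁ n = 1)
    (h2 : ∀ n, star (r₂ n) * r₂ n = 1)
    (hsum : ∀ n, r₁ n * star (r₁ n) + r₂ n * star (r₂ n) = 1)
    (hinv : ∀ (g : G) (n : ℕ), β g (r₁ n) = r₁ n ∧ β g (r₂ n) = r₂ n)
    (hr₁s : Tendsto (fun n => ‖(1 - r₁ n) * s n‖) atTop (nhds 0)) :
    (∀ n, star (r₁ n * s n + r₂ n * CFC.sqrt (1 - star (s n) * s n)) *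
        (r₁ n * s n + r₂ n * CFC.sqrt (1 - star (s n) * s n)) = 1) ∧
    (∀ K : Set G, IsCompact K →
      (∀ ε > 0, ∃ N, ∀ n ≥ N, ∀ g ∈ K,
        ‖star (s n) * s n - β g (star (s n) * s n)‖ ≤ ε) →
      ∀ ε > 0, ∃ N, ∀ n ≥ N, ∀ g ∈ K,
        ‖((r₁ n * s n + r₂ n * CFC.sqrt (1 - star (s n) * s n)) -
            β g (r₁ n * s n + r₂ n * CFC.sqrt (1 - star (s n) * s n))) -
          (s n - β g (s n))‖ ≤ ε) := by
  -- basic positivity facts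
  have ha : ∀ n, 0 ≤ 1 - star (s n) * s n := by
    intro n
    rw [sub_nonneg]
    rw [← CStarAlgebra.norm_le_one_iff_of_nonneg (star (s n) * s n) (star_mul_self_nonneg _)]
    rw [CStarRing.norm_star_mul_self]
    calc ‖s n‖ * ‖s n‖ ≤ 1 * 1 := mul_le_mul (hs n) (hs n) (norm_nonneg _) zero_le_one
      _ = 1 := one_mul 1
  have hna : ∀ n, ‖1 - star (s n) * s n‖ ≤ 1 := by
    intro n
    rw [CStarAlgebra.norm_le_one_iff_of_nonneg _ (ha n)]
    have := star_mul_self_nonneg (s n)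
    calc (1 : M) - star (s n) * s n ≤ 1 - 0 := by gcongr
      _ = 1 := sub_zero 1
  -- orthogonality of the isometries
  have key : ∀ n, star (r₁ n) * r₂ n = 0 := by
    intro n
    have h22 : r₂ n * star (r₂ n) = 1 - r₁ n * star (r₁ n) := by
      rw [← hsum n]; abel
    have hx : (star (r₁ n) * r₂ n) * star (star (r₁ n) * r₂ n) = 0 := by
      rw [star_mul, star_star]
      calc star (r₁ n) * r₂ n * (star (r₂ n) * r₁ n)
          = star (r₁ n) * (r₂ n * star (r₂ n)) * r₁ n := by noncomm_ring
        _ = star (r₁ n) * (1 - r₁ n * star (r₁ n)) * r₁ n := by rw [h22]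
        _ = star (r₁ n) * r₁ n - (star (r₁ n) * r₁ n) * (star (r₁ n) * r₁ n) := by noncomm_ring
        _ = 0 := by rw [h1 n]; simp
    have := CStarRing.norm_self_mul_star (x := star (r₁ n) * r₂ n)
    rw [hx, norm_zero] at this
    have h0 : ‖star (r₁ n) * r₂ n‖ = 0 := by nlinarith [norm_nonneg (star (r₁ n) * r₂ n)]
    exact norm_eq_zero.mp h0
  have key' : ∀ n, star (r₂ n) * r₁ n = 0 := by
    intro n
    have : star (star (r₁ n) * r₂ n) = 0 := by rw [key n, star_zero]
    rwa [star_mul, star_star] at this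
  have hst : ∀ n, star (CFC.sqrt (1 - star (s n) * s n)) = CFC.sqrt (1 - star (s n) * s n) :=
    fun n => (IsSelfAdjoint.of_nonneg (CFC.sqrt_nonneg _)).star_eq
  have htt : ∀ n, CFC.sqrt (1 - star (s n) * s n) * CFC.sqrt (1 - star (s n) * s n)
      = 1 - star (s n) * s n := fun n => CFC.sqrt_mul_sqrt_self _ (ha n)
  constructor
  · -- Part 1: S is an isometry
    intro n
    set t := CFC.sqrt (1 - star (s n) * s n) with hts
    rw [star_add, star_mul, star_mul, hst n]
    have e1 : star (s n) * star (r₁ n) * (r₁ n * s n) = star (s n) * s n := by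
      rw [mul_assoc, ← mul_assoc (star (r₁ n)), h1 n, one_mul]
    have e2 : star (s n) * star (r₁ n) * (r₂ n * t) = 0 := by
      rw [mul_assoc, ← mul_assoc (star (r₁ n)), key n, zero_mul, mul_zero]
    have e3 : t * star (r₂ n) * (r₁ n * s n) = 0 := by
      rw [mul_assoc, ← mul_assoc (star (r₂ n)), key' n, zero_mul, mul_zero]
    have e4 : t * star (r₂ n) * (r₂ n * t) = 1 - star (s n) * s n := by
      rw [mul_assoc, ← mul_assoc (star (r₂ n)), h2 n, one_mul]; exact htt n
    calc (star (s n) * star (r₁ n) + t * star (r₂ n)) * (r₁ n * s n + r₂ n * t)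
        = star (s n) * star (r₁ n) * (r₁ n * s n) + star (s n) * star (r₁ n) * (r₂ n * t)
          + (t * star (r₂ n) * (r₁ n * s n) + t * star (r₂ n) * (r₂ n * t)) := by noncomm_ring
      _ = star (s n) * s n + 0 + (0 + (1 - star (s n) * s n)) := by rw [e1, e2, e3, e4]
      _ = 1 := by abel
  · -- Part 2
    intro K _hK hKs ε hε
    rcases subsingleton_or_nontrivial M with hM | hM
    · exact ⟨0, fun n _ g _ => by
        rw [Subsingleton.elim (((r₁ n * s n + r₂ n * CFC.sqrt (1 - star (s n) * s n)) -
            β g (r₁ n * s n + r₂ n * CFC.sqrt (1 - star (s n) * s n))) -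
          (s n - β g (s n))) (0 : M), norm_zero]
        exact hε.le⟩
    obtain ⟨δ', hδ'pos, hδ'⟩ := aux_sqrt_cont (A := M) (show (0:ℝ) < ε/2 by positivity)
    obtain ⟨N₁, hN₁⟩ := hKs δ' hδ'pos
    obtain ⟨N₂, hN₂⟩ := (hr₁s.eventually (eventually_le_nhds
      (show (0:ℝ) < ε/4 by positivity))).exists_forall_of_atTop
    refine ⟨max N₁ N₂, fun n hn g hg => ?_⟩
    have hn₁ : n ≥ N₁ := le_trans (le_max_left _ _) hn
    have hn₂ : n ≥ N₂ := le_trans (le_max_right _ _) hn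
    set a := 1 - star (s n) * s n with hadef
    have hβnorm : ∀ z : M, ‖β g z‖ = ‖z‖ := fun z =>
      NonUnitalStarAlgHom.norm_map (β g) (β g).injective z
    -- b = β g a is nonneg with norm ≤ 1
    have hb : 0 ≤ β g a := by
      have : β g a = star (β g (CFC.sqrt a)) * β g (CFC.sqrt a) := by
        rw [← map_star, ← map_mul, hst n, htt n]
      rw [this]
      exact star_mul_self_nonneg _
    have hnb : ‖β g a‖ ≤ 1 := by rw [hβnorm]; exact hna n
    -- β commutes with sqrt
    have hβsqrt : β g (CFC.sqrt a) = CFC.sqrt (β g a) := by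
      rw [aux_sqrt_eq_real_cfc (ha n), aux_sqrt_eq_real_cfc hb]
      exact StarAlgHomClass.map_cfc (β g) Real.sqrt a
        (hf := Real.continuous_sqrt.continuousOn)
        (hφ := (NonUnitalStarAlgHom.isometry (β g) (β g).injective).continuous)
        (ha := IsSelfAdjoint.of_nonneg (ha n)) (hφa := IsSelfAdjoint.of_nonneg hb)
    -- decompose the difference
    have hβS : β g (r₁ n * s n + r₂ n * CFC.sqrt a)
        = r₁ n * β g (s n) + r₂ n * CFC.sqrt (β g a) := by
      rw [map_add, map_mul, map_mul, (hinv g n).1, (hinv g n).2, hβsqrt]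
    have hD : ((r₁ n * s n + r₂ n * CFC.sqrt a) - β g (r₁ n * s n + r₂ n * CFC.sqrt a))
        - (s n - β g (s n))
        = ((r₁ n - 1) * s n - (r₁ n - 1) * β g (s n))
          + r₂ n * (CFC.sqrt a - CFC.sqrt (β g a)) := by
      rw [hβS]; noncomm_ring
    rw [hD]
    -- bound the first chunk
    have hb1 : ‖(r₁ n - 1) * s n‖ ≤ ε/4 := by
      have : (r₁ n - 1) * s n = -((1 - r₁ n) * s n) := by noncomm_ring
      rw [this, norm_neg]
      exact hN₂ n hn₂
    have hb2 : ‖(r₁ n - 1) * β g (s n)‖ ≤ ε/4 := by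
      have : (r₁ n - 1) * β g (s n) = β g ((r₁ n - 1) * s n) := by
        rw [map_mul, map_sub, map_one, (hinv g n).1]
      rw [this, hβnorm]
      exact hb1
    -- bound the sqrt chunk
    have hr₂norm : ‖r₂ n‖ ≤ 1 := by
      have h := CStarRing.norm_star_mul_self (x := r₂ n)
      rw [h2 n, norm_one] at h
      nlinarith [norm_nonneg (r₂ n)]
    have hab : ‖a - β g a‖ ≤ δ' := by
      have : a - β g a = β g (star (s n) * s n) - star (s n) * s n := by
        rw [hadef, map_sub, map_one, map_mul, map_star]; abel
      rw [this, norm_sub_rev]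
      exact hN₁ n hn₁ g hg
    have hsq : ‖CFC.sqrt a - CFC.sqrt (β g a)‖ ≤ ε/2 :=
      hδ' a (β g a) (ha n) hb (hna n) hnb hab
    calc ‖((r₁ n - 1) * s n - (r₁ n - 1) * β g (s n))
          + r₂ n * (CFC.sqrt a - CFC.sqrt (β g a))‖
        ≤ ‖(r₁ n - 1) * s n - (r₁ n - 1) * β g (s n)‖
          + ‖r₂ n * (CFC.sqrt a - CFC.sqrt (β g a))‖ := norm_add_le _ _
      _ ≤ (‖(r₁ n - 1) * s n‖ + ‖(r₁ n - 1) * β g (s n)‖)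
          + ‖r₂ n‖ * ‖CFC.sqrt a - CFC.sqrt (β g a)‖ :=
          add_le_add (norm_sub_le _ _) (norm_mul_le _ _)
      _ ≤ (ε/4 + ε/4) + 1 * (ε/2) := by
          refine add_le_add (add_le_add hb1 hb2) ?_
          exact mul_le_mul hr₂norm hsq (norm_nonneg _) zero_le_one
      _ = ε := by ring
end

section
/- Let (A_n, α_n) be G-C*-dynamical systems with equivariant *-homomorphisms φ_n : A_n → A_{n+1} that admit equivariant completely positive contractive left inverses ψ_n (ψ_n ∘ φ_n = id). If each φ_n induces an isomorphism on the functor F(−) = KK^G(−, β) for every action β on a separable C*-algebra, and the resulting inverse system satisfies the Milnor lim¹ exact sequence 0 → lim¹ KK^G_1(α_n, β) → KK^G(colim α_n, β) → lim KK^G(α_n, β) → 0, then the canonical map (A_1, α_1) → colim (A_n, α_n) is a KK^G-equivalence. -/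
open CategoryTheory

/-- Work in an (abstract, preadditive) `KK^G`-category `C`, whose objects
play the role of `G`-C*-dynamical systems and whose hom groups play the role of
`KK^G(−, −)`; the object map `S1` plays the role of the suspension, so that
`X ⟶ S1 Z` is `KK^G_1(X, Z)`.  Let `X n` be systems with connecting morphisms
`φ n : X n ⟶ X (n+1)` admitting (equivariant c.p.c.) left inverses `ψ n`, and let `Y` be
the colimit with structure morphisms `ι n`.  Assume each `φ n` induces an isomorphism on
`KK^G(−, Z)` for every `Z`, and that the Milnor `lim¹` exact sequence
`0 → lim¹ KK^G_1(X n, Z) → KK^G(Y, Z) → lim KK^G(X n, Z) → 0` holds: the canonical map to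
the inverse limit is surjective, and its kernel is exhausted by an additive map from
`∏ n, KK^G_1(X n, Z)` vanishing exactly on the image of the `lim¹`-difference map.
Then the canonical morphism `ι 0 : X 0 ⟶ Y` is a `KK^G`-equivalence (an isomorphism). -/
theorem colimit_map_is_KK_equivalence
    {C : Type*} [Category C] [Preadditive C]
    (X : ℕ → C) (Y : C)
    (φ : ∀ n, X n ⟶ X (n + 1))
    (ψ : ∀ n, X (n + 1) ⟶ X n)
    (hψ : ∀ n, φ n ≫ ψ n = 𝟙 (X n))
    (ι : ∀ n, X n ⟶ Y)
    (hι : ∀ n, φ n ≫ ι (n + 1) = ι n)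
    (hφ_iso : ∀ (n : ℕ) (Z : C),
      Function.Bijective (fun f : X (n + 1) ⟶ Z => φ n ≫ f))
    (S1 : C → C)
    (hMilnor_surj : ∀ (Z : C) (f : ∀ n, X n ⟶ Z),
      (∀ n, φ n ≫ f (n + 1) = f n) → ∃ F : Y ⟶ Z, ∀ n, ι n ≫ F = f n)
    (hMilnor_ker : ∀ Z : C, ∃ κ : (∀ n, X n ⟶ S1 Z) →+ (Y ⟶ Z),
      (∀ x, ∀ n, ι n ≫ κ x = 0) ∧
      (∀ F : Y ⟶ Z, (∀ n, ι n ≫ F = 0) → ∃ x, κ x = F) ∧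
      (∀ x, κ x = 0 ↔ ∃ y : ∀ n, X n ⟶ S1 Z, ∀ n, x n = y n - φ n ≫ y (n + 1))) :
    IsIso (ι 0) := by
  -- ψ n is a two-sided inverse of φ n
  have hψφ : ∀ n, ψ n ≫ φ n = 𝟙 (X (n + 1)) := by
    intro n
    apply (hφ_iso n (X (n + 1))).1
    show φ n ≫ (ψ n ≫ φ n) = φ n ≫ 𝟙 _
    rw [← Category.assoc, hψ n, Category.id_comp, Category.comp_id]
  -- compatible family f n : X n ⟶ X 0
  let f : ∀ n, X n ⟶ X 0 := fun n =>
    Nat.rec (motive := fun n => X n ⟶ X 0) (𝟙 (X 0)) (fun n fn => ψ n ≫ fn) n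
  have hf : ∀ n, φ n ≫ f (n + 1) = f n := by
    intro n
    show φ n ≫ (ψ n ≫ f n) = f n
    rw [← Category.assoc, hψ n, Category.id_comp]
  obtain ⟨F, hF⟩ := hMilnor_surj (X 0) f hf
  have h1 : ι 0 ≫ F = 𝟙 (X 0) := hF 0
  -- f n ≫ ι 0 = ι n
  have hfι : ∀ n, f n ≫ ι 0 = ι n := by
    intro n
    induction n with
    | zero => exact Category.id_comp _
    | succ n ih =>
      show (ψ n ≫ f n) ≫ ι 0 = ι (n + 1)
      rw [Category.assoc, ih, ← hι n, ← Category.assoc, hψφ n, Category.id_comp]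
  have hker : ∀ n, ι n ≫ (F ≫ ι 0 - 𝟙 Y) = 0 := by
    intro n
    rw [Preadditive.comp_sub, ← Category.assoc, hF n, hfι n, Category.comp_id, sub_self]
  obtain ⟨κ, -, hsurj, hvan⟩ := hMilnor_ker Y
  obtain ⟨x, hx⟩ := hsurj (F ≫ ι 0 - 𝟙 Y) hker
  -- lim¹ vanishes: x is a difference
  let y : ∀ n, X n ⟶ S1 Y := fun n =>
    Nat.rec (motive := fun n => X n ⟶ S1 Y) 0 (fun n yn => ψ n ≫ (yn - x n)) n
  have hxy : κ x = 0 := by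
    rw [hvan]
    refine ⟨y, fun n => ?_⟩
    show x n = y n - φ n ≫ (ψ n ≫ (y n - x n))
    rw [← Category.assoc, hψ n, Category.id_comp, sub_sub_cancel]
  have h2 : F ≫ ι 0 = 𝟙 Y := by
    have := hx.symm.trans hxy
    rwa [sub_eq_zero] at this
  exact ⟨F, h1, h2⟩
end
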